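/- arXiv:2502.19753 — 7 statements merged into one kernel-verified Lean document; each statement's English description precedes it below -/
import Mathlib

section
/- Let n and m be positive integers and let x, y : Fin m → Fin n → ℤ. Then B(x,y) ∈ ℤ if and only if ρ(x)·ρ(y) = 0 in ZMod (n+1). -/
open Finset

/-- The bilinear form of `m` copies of the dual `A_n` root lattice,
written in the dual basis. -/
noncomputable def BA (n m : ℕ) (x y : Fin m → Fin n → ℚ) : ℚ :=
  ∑ i, ((∑ j, x i j * y i j) -
    (1 / ((n : ℚ) + 1)) * (∑ j, x i j) * (∑ j, y i j))

/-- The reduction map to `(ℤ/(n+1)ℤ)^m`. -/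
def rhoA (n m : ℕ) (x : Fin m → Fin n → ℤ) : Fin m → ZMod (n + 1) :=
  fun i => ((∑ j, x i j : ℤ) : ZMod (n + 1))

theorem stmt0 (n m : ℕ) (hn : 0 < n) (hm : 0 < m)
    (x y : Fin m → Fin n → ℤ) :
    (∃ k : ℤ, (k : ℚ) =
        BA n m (fun i j => (x i j : ℚ)) (fun i j => (y i j : ℚ))) ↔
      ∑ i, rhoA n m x i * rhoA n m y i = 0 := by
  set T : ℤ := ∑ i, ∑ j, x i j * y i j with hT
  set S : ℤ := ∑ i, (∑ j, x i j) * (∑ j, y i j) with hS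
  have hne : ((n : ℚ) + 1) ≠ 0 := by positivity
  have hBA : BA n m (fun i j => (x i j : ℚ)) (fun i j => (y i j : ℚ)) =
      (T : ℚ) - (S : ℚ) / ((n : ℚ) + 1) := by
    simp only [BA]
    rw [hT, hS]
    push_cast
    rw [Finset.sum_div, ← Finset.sum_sub_distrib]
    apply Finset.sum_congr rfl
    intro i _
    field_simp
  have hrho : ∑ i, rhoA n m x i * rhoA n m y i = ((S : ZMod (n + 1))) := by
    simp [rhoA, hS]
  rw [hrho]
  rw [ZMod.intCast_zmod_eq_zero_iff_dvd]
  constructor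
  · rintro ⟨k, hk⟩
    rw [hBA] at hk
    have : ((T - k : ℤ) : ℚ) * ((n : ℚ) + 1) = (S : ℚ) := by
      field_simp at hk ⊢
      push_cast
      linarith
    have : ((T - k) * ((n : ℤ) + 1) : ℤ) = S := by
      exact_mod_cast this
    exact ⟨T - k, by push_cast; linarith⟩
  · rintro ⟨c, hc⟩
    refine ⟨T - c, ?_⟩
    rw [hBA, hc]
    push_cast
    field_simp
end

section
/- Let n be an even positive integer, m a positive integer, and x : Fin m → Fin n → ℤ. Then B(x,x) ∈ 2ℤ if and only if ρ(x)·ρ(x) = 0 in ZMod (n+1). -/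
open Finset

/-!
Clearing the denominator, `(n+1) B(x,x) = (n+1) Q - T` with `Q = ∑ x_ij²` and
`T = ∑_i (∑_j x_ij)²`, and `T ≡ ρ(x)·ρ(x) mod n+1`. Since `a² ≡ a mod 2`, `Q ≡ T mod 2`;
as `n+1` is odd, `2(n+1) ∣ (n+1) Q - T` then holds exactly when `n+1 ∣ T`.
-/

theorem Int.two_dvd_sq_sum_sub_sum_sq {ι : Type*} (s : Finset ι) (f : ι → ℤ) :
    2 ∣ (∑ i ∈ s, f i) ^ 2 - ∑ i ∈ s, f i ^ 2 := by
  refine (ZMod.intCast_zmod_eq_zero_iff_dvd _ 2).mp ?_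
  push_cast
  simp only [ZMod.pow_card, sub_self]

theorem Int.exists_two_mul_mul_eq_iff_dvd {d q t : ℤ} (hd : Odd d) (hqt : 2 ∣ q - t) :
    (∃ k : ℤ, 2 * k * d = d * q - t) ↔ d ∣ t := by
  constructor
  · rintro ⟨k, hk⟩
    exact ⟨q - 2 * k, by linarith⟩
  · rintro ⟨c, rfl⟩
    -- `q - d c ≡ q - c mod 2` because `d` is odd
    have hqc : 2 ∣ q - c := by
      obtain ⟨r, rfl⟩ := hd
      have : q - c = (q - (2 * r + 1) * c) + 2 * (r * c) := by ring
      rw [this]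
      exact dvd_add hqt (dvd_mul_right 2 _)
    obtain ⟨k, hk⟩ := hqc
    exact ⟨k, by rw [← hk]; ring⟩

theorem BA_intCast_self (n m : ℕ) (x : Fin m → Fin n → ℤ) :
    BA n m (fun i j => (x i j : ℚ)) (fun i j => (x i j : ℚ)) =
      (((n + 1) * ∑ i, ∑ j, x i j ^ 2 - ∑ i, (∑ j, x i j) ^ 2 : ℤ) : ℚ) / ((n : ℚ) + 1) := by
  rw [eq_div_iff (by positivity), BA, Finset.sum_mul]
  push_cast
  rw [Finset.mul_sum, ← Finset.sum_sub_distrib]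
  refine Finset.sum_congr rfl fun i _ => ?_
  field_simp

theorem sum_rhoA_mul_self (n m : ℕ) (x : Fin m → Fin n → ℤ) :
    ∑ i, rhoA n m x i * rhoA n m x i = ((∑ i, (∑ j, x i j) ^ 2 : ℤ) : ZMod (n + 1)) := by
  simp [rhoA, sq]

theorem two_dvd_sum_sq_sub_sum_sq_sum {m n : ℕ} (x : Fin m → Fin n → ℤ) :
    2 ∣ ∑ i, ∑ j, x i j ^ 2 - ∑ i, (∑ j, x i j) ^ 2 := by
  rw [← dvd_neg, neg_sub, ← Finset.sum_sub_distrib]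
  exact Finset.dvd_sum fun i _ => Int.two_dvd_sq_sum_sub_sum_sq _ _

theorem stmt2_general (n m : ℕ) (heven : Even n)
    (x : Fin m → Fin n → ℤ) :
    (∃ k : ℤ, ((2 * k : ℤ) : ℚ) =
        BA n m (fun i j => (x i j : ℚ)) (fun i j => (x i j : ℚ))) ↔
      ∑ i, rhoA n m x i * rhoA n m x i = 0 := by
  have hodd : Odd ((n : ℤ) + 1) := by exact_mod_cast heven.add_one
  rw [sum_rhoA_mul_self, ZMod.intCast_zmod_eq_zero_iff_dvd, Nat.cast_add, Nat.cast_one,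
    ← Int.exists_two_mul_mul_eq_iff_dvd hodd (two_dvd_sum_sq_sub_sum_sq_sum x)]
  refine exists_congr fun k => ?_
  rw [BA_intCast_self, eq_div_iff (by positivity)]
  exact_mod_cast Iff.rfl

theorem stmt2 (n m : ℕ) (hn : 0 < n) (heven : Even n) (hm : 0 < m)
    (x : Fin m → Fin n → ℤ) :
    (∃ k : ℤ, ((2 * k : ℤ) : ℚ) =
        BA n m (fun i j => (x i j : ℚ)) (fun i j => (x i j : ℚ))) ↔
      ∑ i, rhoA n m x i * rhoA n m x i = 0 :=
  stmt2_general n m heven x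
end

section
/- Let n and m be positive integers and let C be a code of length m over ℤ/(n+1)ℤ. Then Γ_C^* = Γ_{C^⊥}, i.e. the dual of the lattice Γ_C (taken inside ℚ-valued vectors) equals the lattice constructed from the dual code C^⊥. -/
open Finset

/-- The dual code of a set of codewords. -/
def dualCodeA (n m : ℕ) (C : Set (Fin m → ZMod (n + 1))) :
    Set (Fin m → ZMod (n + 1)) :=
  {u | ∀ v ∈ C, ∑ i, u i * v i = 0}

/-- The lattice `Γ_C` constructed from the code `C`. -/
def GammaA (n m : ℕ) (C : Set (Fin m → ZMod (n + 1))) :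
    Set (Fin m → Fin n → ℤ) :=
  {x | rhoA n m x ∈ C}

/-- Coercion of an integral vector to a rational vector. -/
def toQA (n m : ℕ) (x : Fin m → Fin n → ℤ) : Fin m → Fin n → ℚ :=
  fun i j => (x i j : ℚ)

/-- The dual lattice `Γ_C^*`, taken inside the `ℚ`-valued vectors. -/
noncomputable def dualLatticeA (n m : ℕ) (C : Set (Fin m → ZMod (n + 1))) :
    Set (Fin m → Fin n → ℚ) :=
  {z | ∀ y ∈ GammaA n m C, ∃ k : ℤ, (k : ℚ) = BA n m z (toQA n m y)}

def rowVecA (n m : ℕ) (i : Fin m) (g : Fin n → ℤ) : Fin m → Fin n → ℤ :=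
  fun i' j' => if i' = i then g j' else 0

lemma toQA_rowVecA (n m : ℕ) (i : Fin m) (g : Fin n → ℤ) :
    toQA n m (rowVecA n m i g) = fun i' j' => if i' = i then (g j' : ℚ) else 0 := by
  funext i' j'
  simp [toQA, rowVecA, apply_ite (Int.cast : ℤ → ℚ)]

lemma rhoA_rowVecA (n m : ℕ) (i : Fin m) (g : Fin n → ℤ) :
    rhoA n m (rowVecA n m i g) =
      fun i' => if i' = i then ((∑ j, g j : ℤ) : ZMod (n + 1)) else 0 := by
  funext i'
  by_cases h : i' = i <;> simp [rhoA, rowVecA, h]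

lemma BA_row (n m : ℕ) (z : Fin m → Fin n → ℚ) (i : Fin m) (f : Fin n → ℚ) :
    BA n m z (fun i' j' => if i' = i then f j' else 0)
      = (∑ j, z i j * f j) - (1 / ((n:ℚ)+1)) * (∑ j, z i j) * (∑ j, f j) := by
  unfold BA
  rw [Finset.sum_eq_single_of_mem i (Finset.mem_univ i)]
  · simp
  · intro b _ hb
    simp [hb]

lemma BA_col (n m : ℕ) (hn : 0 < n) (z : Fin m → Fin n → ℚ) (c : Fin m → ℚ) :
    BA n m z (fun i j' => if j' = (⟨0, hn⟩ : Fin n) then c i else 0)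
      = ∑ i, (z i ⟨0, hn⟩ * c i - (1 / ((n:ℚ)+1)) * (∑ j, z i j) * c i) := by
  unfold BA
  refine Finset.sum_congr rfl fun i _ => ?_
  simp [mul_ite, mul_comm]

theorem stmt3 (n m : ℕ) (hn : 0 < n) (hm : 0 < m)
    (C : Submodule (ZMod (n + 1)) (Fin m → ZMod (n + 1))) :
    dualLatticeA n m (C : Set (Fin m → ZMod (n + 1))) =
      toQA n m '' GammaA n m (dualCodeA n m (C : Set (Fin m → ZMod (n + 1)))) := by
  have hne : ((n:ℚ)+1) ≠ 0 := by positivity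
  ext z
  simp only [Set.mem_image]
  constructor
  · intro hz
    set j0 : Fin n := ⟨0, hn⟩ with hj0
    set S : Subring ℚ := (Int.castRingHom ℚ).range with hS
    -- step 1: differences are integers
    have hdiff : ∀ i j, z i j - z i j0 ∈ S := by
      intro i j
      set g : Fin n → ℤ := fun j' => (if j' = j then 1 else 0) - (if j' = j0 then 1 else 0) with hg
      have hmem : rowVecA n m i g ∈ GammaA n m (C : Set (Fin m → ZMod (n + 1))) := by
        show rhoA n m (rowVecA n m i g) ∈ (C : Set _)
        rw [rhoA_rowVecA]
        have : (∑ j', g j' : ℤ) = 0 := by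
          simp [hg, Finset.sum_sub_distrib]
        rw [this]
        have : (fun i' => if i' = i then ((0:ℤ) : ZMod (n+1)) else 0) = (0 : Fin m → ZMod (n+1)) := by
          funext i'; split <;> simp
        rw [this]
        exact C.zero_mem
      obtain ⟨k, hk⟩ := hz _ hmem
      rw [toQA_rowVecA, BA_row] at hk
      have hgq : ∀ j', ((g j' : ℤ) : ℚ) = (if j' = j then 1 else 0) - (if j' = j0 then 1 else 0) := by
        intro j'; simp [hg]
      simp only [hgq] at hk
      have h1 : (∑ j', z i j' * ((if j' = j then (1:ℚ) else 0) - (if j' = j0 then 1 else 0)))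
          = z i j - z i j0 := by
        simp [mul_sub, mul_ite, Finset.sum_sub_distrib]
      have h2 : (∑ j', ((if j' = j then (1:ℚ) else 0) - (if j' = j0 then 1 else 0))) = 0 := by
        simp [Finset.sum_sub_distrib]
      rw [h1, h2] at hk
      exact ⟨k, by simpa using hk⟩
    -- step 2: (n+1) z i j - row sum is an integer
    have hrow : ∀ i j, z i j * ((n:ℚ)+1) - (∑ j', z i j') ∈ S := by
      intro i j
      set g : Fin n → ℤ := fun j' => if j' = j then ((n:ℤ)+1) else 0 with hg
      have hmem : rowVecA n m i g ∈ GammaA n m (C : Set (Fin m → ZMod (n + 1))) := by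
        show rhoA n m (rowVecA n m i g) ∈ (C : Set _)
        rw [rhoA_rowVecA]
        have hsum : (∑ j', g j' : ℤ) = (n:ℤ)+1 := by simp [hg]
        rw [hsum]
        have : (fun i' => if i' = i then (((n:ℤ)+1 : ℤ) : ZMod (n+1)) else 0)
            = (0 : Fin m → ZMod (n+1)) := by
          funext i'
          have : (((n:ℤ)+1 : ℤ) : ZMod (n+1)) = 0 := by
            have : ((n:ℤ)+1 : ℤ) = ((n+1 : ℕ) : ℤ) := by push_cast; ring
            rw [this]; exact_mod_cast ZMod.natCast_self (n+1)
          split <;> simp [this]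
        rw [this]
        exact C.zero_mem
      obtain ⟨k, hk⟩ := hz _ hmem
      rw [toQA_rowVecA, BA_row] at hk
      have hgq : ∀ j', ((g j' : ℤ) : ℚ) = if j' = j then ((n:ℚ)+1) else 0 := by
        intro j'; simp [hg, apply_ite (Int.cast : ℤ → ℚ)]
      simp only [hgq] at hk
      have h1 : (∑ j', z i j' * (if j' = j then ((n:ℚ)+1) else 0)) = z i j * ((n:ℚ)+1) := by
        simp [mul_ite]
      have h2 : (∑ j', (if j' = j then ((n:ℚ)+1) else 0)) = ((n:ℚ)+1) := by simp
      rw [h1, h2] at hk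
      have h3 : (k:ℚ) = z i j * ((n:ℚ)+1) - (∑ j', z i j') := by
        rw [hk]; field_simp
      exact ⟨k, by simpa using h3⟩
    -- step 3: every entry is an integer
    have hint : ∀ i j, z i j ∈ S := by
      intro i j
      have hz0 : z i j0 ∈ S := by
        have hs : (∑ j', (z i j' - z i j0)) ∈ S := Subring.sum_mem S (fun j' _ => hdiff i j')
        have hsum : (∑ j', z i j') = (n:ℚ) * z i j0 + (∑ j', (z i j' - z i j0)) := by
          rw [Finset.sum_sub_distrib]
          simp [Finset.card_univ, mul_comm]
        have h := hrow i j0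
        rw [hsum] at h
        have heq : z i j0 * ((n:ℚ)+1) - ((n:ℚ) * z i j0 + (∑ j', (z i j' - z i j0)))
            = z i j0 - (∑ j', (z i j' - z i j0)) := by ring
        rw [heq] at h
        have := Subring.add_mem S h hs
        simpa using this
      have := Subring.add_mem S (hdiff i j) hz0
      simpa using this
    -- choose integer matrix
    choose w hw using fun i j => hint i j
    simp only [eq_intCast] at hw
    have hwz : toQA n m (fun i j => w i j) = z := by
      funext i j
      simpa [toQA] using hw i j
    refine ⟨fun i j => w i j, ?_, hwz⟩
    -- step 4: rho w ∈ dual code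
    intro v hv
    set c : Fin m → ℤ := fun i => ((v i).val : ℤ) with hc
    have hmem : (fun i j' => if j' = j0 then c i else 0) ∈ GammaA n m (C : Set (Fin m → ZMod (n+1))) := by
      show rhoA n m _ ∈ (C : Set _)
      have : rhoA n m (fun i j' => if j' = j0 then c i else 0) = v := by
        funext i
        simp [rhoA, hc, ZMod.natCast_val, ZMod.cast_id]
      rw [this]; exact hv
    obtain ⟨k, hk⟩ := hz _ hmem
    have htq : toQA n m (fun i j' => if j' = j0 then c i else 0)
        = fun i j' => if j' = j0 then ((c i : ℤ) : ℚ) else 0 := by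
      funext i j'
      simp [toQA, apply_ite (Int.cast : ℤ → ℚ)]
    rw [htq, BA_col n m hn] at hk
    rw [← hj0] at hk
    -- rewrite z in terms of w inside hk
    have hk' : (k:ℚ) = (∑ i, ((w i j0 : ℚ) * (c i : ℚ)))
        - (1/((n:ℚ)+1)) * (∑ i, (∑ j, (w i j :ℚ)) * (c i : ℚ)) := by
      rw [hk, Finset.sum_sub_distrib]
      congr 1
      · exact Finset.sum_congr rfl fun i _ => by rw [hw i j0]
      · rw [Finset.mul_sum]
        refine Finset.sum_congr rfl fun i _ => ?_
        rw [show (∑ j, (w i j : ℚ)) = ∑ j, z i j from Finset.sum_congr rfl fun j _ => hw i j]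
        ring
    have hk2 : (1/((n:ℚ)+1)) * (∑ i, (∑ j, (w i j :ℚ)) * (c i : ℚ))
        = (∑ i, ((w i j0 : ℚ) * (c i : ℚ))) - k := by linarith [hk']
    have hk3 : (∑ i, (∑ j, (w i j :ℚ)) * (c i : ℚ))
        = ((n:ℚ)+1) * ((∑ i, ((w i j0 : ℚ) * (c i : ℚ))) - k) := by
      rw [← hk2, ← mul_assoc]
      field_simp
    have hdvd : ((n:ℤ)+1) ∣ (∑ i, (∑ j, w i j) * c i) := by
      refine ⟨(∑ i, w i j0 * c i) - k, ?_⟩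
      exact_mod_cast hk3
    have h2 : ((∑ i, (∑ j, w i j) * c i : ℤ) : ZMod (n+1)) = 0 := by
      rw [ZMod.intCast_zmod_eq_zero_iff_dvd]
      exact_mod_cast hdvd
    push_cast at h2
    have : ∑ i, rhoA n m (fun i j => w i j) i * v i = 0 := by
      simpa [rhoA, hc, ZMod.natCast_val, ZMod.cast_id] using h2
    exact this
  · rintro ⟨x, hx, rfl⟩
    intro y hy
    have h0 := hx (rhoA n m y) hy
    have hdvd : ((n:ℤ)+1) ∣ ∑ i, (∑ j, x i j) * (∑ j, y i j) := by
      have hz0 : ((∑ i, (∑ j, x i j) * (∑ j, y i j) : ℤ) : ZMod (n+1)) = 0 := by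
        push_cast
        simpa [rhoA] using h0
      rw [ZMod.intCast_zmod_eq_zero_iff_dvd] at hz0
      exact_mod_cast hz0
    obtain ⟨t, ht⟩ := hdvd
    refine ⟨(∑ i, ∑ j, x i j * y i j) - t, ?_⟩
    have key : BA n m (toQA n m x) (toQA n m y)
        = (∑ i, ∑ j, (x i j : ℚ) * (y i j : ℚ))
          - (1/((n:ℚ)+1)) * ∑ i, (∑ j, (x i j : ℚ)) * (∑ j, (y i j : ℚ)) := by
      simp only [BA, toQA, Finset.sum_sub_distrib]
      congr 1
      rw [Finset.mul_sum]
      exact Finset.sum_congr rfl fun i _ => by ring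
    have htQ := congrArg (fun s : ℤ => (s : ℚ)) ht
    push_cast at htQ
    rw [key, htQ]
    push_cast
    field_simp
end

section
/- Let n be an odd positive integer, m a positive integer, and C a code of length m over ℤ/(n+1)ℤ. Then: (1) Γ_C is integral if and only if C ⊆ C^⊥; (2) Γ_C is unimodular if and only if C = C^⊥; (3) Γ_C is even if and only if 2(n+1) divides wt_E(u) for every u ∈ C; (4) Γ_C is even unimodular if and only if C is Type II. -/
open Finset

/-- The Euclidean weight of an element of `(ℤ/(n+1)ℤ)^m`. -/
def wtE (n m : ℕ) (u : Fin m → ZMod (n + 1)) : ℕ :=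
  ∑ i, (u i).val ^ 2

/-- `Γ_C` is integral. -/
def IsIntegralA (n m : ℕ) (C : Set (Fin m → ZMod (n + 1))) : Prop :=
  ∀ x ∈ GammaA n m C, ∀ y ∈ GammaA n m C,
    ∃ k : ℤ, (k : ℚ) = BA n m (toQA n m x) (toQA n m y)

/-- `Γ_C` is even. -/
def IsEvenLatA (n m : ℕ) (C : Set (Fin m → ZMod (n + 1))) : Prop :=
  IsIntegralA n m C ∧ ∀ x ∈ GammaA n m C,
    ∃ k : ℤ, ((2 * k : ℤ) : ℚ) = BA n m (toQA n m x) (toQA n m x)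

/-- `Γ_C` is unimodular. -/
def IsUnimodularA (n m : ℕ) (C : Set (Fin m → ZMod (n + 1))) : Prop :=
  dualLatticeA n m C = toQA n m '' GammaA n m C

lemma BA_toQA (n m : ℕ) (x y : Fin m → Fin n → ℤ) :
    BA n m (toQA n m x) (toQA n m y)
      = ((∑ i, ∑ j, x i j * y i j : ℤ) : ℚ)
        - ((∑ i, (∑ j, x i j) * (∑ j, y i j) : ℤ) : ℚ) / ((n : ℚ) + 1) := by
  unfold BA toQA
  rw [Finset.sum_sub_distrib]
  push_cast
  congr 1
  rw [Finset.sum_div]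
  refine Finset.sum_congr rfl fun i _ => ?_
  ring

lemma int_iff (n m : ℕ) (x y : Fin m → Fin n → ℤ) :
    (∃ k : ℤ, (k : ℚ) = BA n m (toQA n m x) (toQA n m y)) ↔
      ((n : ℤ) + 1) ∣ ∑ i, (∑ j, x i j) * (∑ j, y i j) := by
  have hN : ((n : ℚ) + 1) ≠ 0 := by positivity
  rw [BA_toQA]
  set P : ℤ := ∑ i, ∑ j, x i j * y i j with hP
  set T : ℤ := ∑ i, (∑ j, x i j) * (∑ j, y i j) with hT
  constructor
  · rintro ⟨k, hk⟩
    refine ⟨P - k, ?_⟩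
    have : (T : ℚ) = ((n : ℚ) + 1) * (P - k) := by
      field_simp at hk ⊢
      linarith
    exact_mod_cast this
  · rintro ⟨t, ht⟩
    refine ⟨P - t, ?_⟩
    rw [ht]
    push_cast
    field_simp

lemma dot_zero_iff (n m : ℕ) (x y : Fin m → Fin n → ℤ) :
    (∑ i, rhoA n m x i * rhoA n m y i = 0) ↔
      ((n : ℤ) + 1) ∣ ∑ i, (∑ j, x i j) * (∑ j, y i j) := by
  unfold rhoA
  rw [show (∑ i, ((∑ j, x i j : ℤ) : ZMod (n+1)) * ((∑ j, y i j : ℤ) : ZMod (n+1)))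
      = ((∑ i, (∑ j, x i j) * (∑ j, y i j) : ℤ) : ZMod (n+1)) by push_cast; rfl]
  rw [ZMod.intCast_zmod_eq_zero_iff_dvd]
  norm_cast

def liftA (n m : ℕ) (hn : 0 < n) (u : Fin m → ZMod (n + 1)) : Fin m → Fin n → ℤ :=
  fun i j => if j = ⟨0, hn⟩ then ((u i).val : ℤ) else 0

lemma liftA_rowsum (n m : ℕ) (hn : 0 < n) (u : Fin m → ZMod (n + 1)) (i : Fin m) :
    ∑ j, liftA n m hn u i j = ((u i).val : ℤ) := by
  simp [liftA]

lemma rhoA_liftA (n m : ℕ) (hn : 0 < n) (u : Fin m → ZMod (n + 1)) :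
    rhoA n m (liftA n m hn u) = u := by
  funext i
  simp [rhoA, liftA_rowsum, ZMod.natCast_val, ZMod.cast_id]

lemma rowlem (n : ℕ) (hodd : Odd n) (q s r : ℤ)
    (h2 : (2:ℤ) ∣ (q - s)) (hN : ((n:ℤ)+1) ∣ (s - r)) :
    (2*((n:ℤ)+1)) ∣ (((n:ℤ)+1)*q - s*s - (n:ℤ)*(r*r)) := by
  obtain ⟨l, hl⟩ := hodd
  have hl' : (n:ℤ) = 2*(l:ℤ)+1 := by exact_mod_cast hl
  obtain ⟨a, ha⟩ := hN
  obtain ⟨b, hb⟩ := h2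
  obtain ⟨c, hc⟩ := Int.even_mul_succ_self (r-1)
  have hc' : r*r = r + 2*c := by linarith [hc]
  refine ⟨b - c - a*r + ((l:ℤ)+1)*(a - a^2), ?_⟩
  have hq : q = s + 2*b := by linarith
  have hs : s = r + ((n:ℤ)+1)*a := by linarith
  subst hq hs
  linear_combination (-(n:ℤ)-1) * hc' + (((n:ℤ)+1)*(a - a^2)) * hl'

lemma sq_cong (n : ℕ) (hodd : Odd n) (a b : ℤ) (h : ((n:ℤ)+1) ∣ (a - b)) :
    (2*((n:ℤ)+1)) ∣ (a*a - b*b) := by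
  obtain ⟨l, hl⟩ := hodd
  have hl' : (n:ℤ) = 2*(l:ℤ)+1 := by exact_mod_cast hl
  obtain ⟨k, hk⟩ := h
  refine ⟨b*k + ((l:ℤ)+1)*k^2, ?_⟩
  have : a = b + ((n:ℤ)+1)*k := by linarith
  subst this
  linear_combination (((n:ℤ)+1)*k^2) * hl'

lemma even_iff' (n m : ℕ) (x : Fin m → Fin n → ℤ) :
    (∃ k : ℤ, ((2 * k : ℤ) : ℚ) = BA n m (toQA n m x) (toQA n m x)) ↔
      (2*((n:ℤ)+1)) ∣ (((n:ℤ)+1) * (∑ i, ∑ j, x i j * x i j)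
        - ∑ i, (∑ j, x i j) * (∑ j, x i j)) := by
  have hN : ((n : ℚ) + 1) ≠ 0 := by positivity
  rw [BA_toQA]
  set P : ℤ := ∑ i, ∑ j, x i j * x i j with hP
  set T : ℤ := ∑ i, (∑ j, x i j) * (∑ j, x i j) with hT
  constructor
  · rintro ⟨k, hk⟩
    refine ⟨k, ?_⟩
    have : (((n:ℤ)+1) * P - T : ℚ) = (2*((n:ℚ)+1)) * k := by
      push_cast at hk ⊢
      field_simp at hk
      linarith
    exact_mod_cast this
  · rintro ⟨t, ht⟩
    refine ⟨t, ?_⟩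
    have hT' : (T : ℚ) = ((n:ℚ)+1) * P - 2*((n:ℚ)+1)*t := by
      have : ((((n:ℤ)+1) * P - T : ℤ) : ℚ) = ((2*((n:ℤ)+1)*t : ℤ) : ℚ) := by
        exact_mod_cast congrArg (Int.cast : ℤ → ℚ) ht
      push_cast at this
      linarith
    rw [hT']
    push_cast
    field_simp
    ring

lemma val_intCast_dvd (n : ℕ) (s : ℤ) :
    ((n:ℤ)+1) ∣ (s - ((s : ZMod (n+1)).val : ℤ)) := by
  have h : (((s : ZMod (n+1)).val : ℤ)) = s % ((n:ℤ)+1) := by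
    rw [ZMod.val_intCast]
    norm_cast
  rw [h]
  refine ⟨s / ((n:ℤ)+1), ?_⟩
  have := Int.mul_ediv_add_emod s ((n:ℤ)+1)
  linarith

lemma wt_cong (n m : ℕ) (hodd : Odd n) (x : Fin m → Fin n → ℤ) :
    (2*((n:ℤ)+1)) ∣ ((((n:ℤ)+1) * (∑ i, ∑ j, x i j * x i j)
        - ∑ i, (∑ j, x i j) * (∑ j, x i j)) - (n:ℤ) * (wtE n m (rhoA n m x) : ℤ)) := by
  have hrw : (((n:ℤ)+1) * (∑ i, ∑ j, x i j * x i j)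
        - ∑ i, (∑ j, x i j) * (∑ j, x i j)) - (n:ℤ) * (wtE n m (rhoA n m x) : ℤ)
      = ∑ i, ((((n:ℤ)+1) * (∑ j, x i j * x i j)
          - (∑ j, x i j) * (∑ j, x i j))
          - (n:ℤ) * (((rhoA n m x i).val : ℤ) * ((rhoA n m x i).val : ℤ))) := by
    rw [Finset.sum_sub_distrib, Finset.sum_sub_distrib, ← Finset.mul_sum, ← Finset.mul_sum]
    congr 2
    unfold wtE
    push_cast
    refine Finset.sum_congr rfl fun i _ => ?_
    ring
  rw [hrw]
  refine Finset.dvd_sum fun i _ => ?_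
  have h2 : (2:ℤ) ∣ ((∑ j, x i j * x i j) - (∑ j, x i j)) := by
    rw [← Finset.sum_sub_distrib]
    refine Finset.dvd_sum fun j _ => ?_
    obtain ⟨c, hc⟩ := Int.even_mul_succ_self (x i j - 1)
    exact ⟨c, by linarith⟩
  have hN : ((n:ℤ)+1) ∣ ((∑ j, x i j) - (((rhoA n m x i).val : ℤ))) :=
    val_intCast_dvd n _
  exact rowlem n hodd (∑ j, x i j * x i j) (∑ j, x i j) ((rhoA n m x i).val : ℤ) h2 hN

lemma polar (n m : ℕ) (hodd : Odd n) (u v : Fin m → ZMod (n+1)) :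
    (2*((n:ℤ)+1)) ∣ ((wtE n m (u + v) : ℤ) - (wtE n m u : ℤ) - (wtE n m v : ℤ)
      - 2 * ∑ i, ((u i).val : ℤ) * ((v i).val : ℤ)) := by
  have hrw : (wtE n m (u + v) : ℤ) - (wtE n m u : ℤ) - (wtE n m v : ℤ)
      - 2 * ∑ i, ((u i).val : ℤ) * ((v i).val : ℤ)
      = ∑ i, ((((u+v) i).val : ℤ) * (((u+v) i).val : ℤ)
          - (((u i).val : ℤ) + ((v i).val : ℤ)) * (((u i).val : ℤ) + ((v i).val : ℤ))) := by
    unfold wtE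
    push_cast
    rw [← Finset.sum_sub_distrib, ← Finset.sum_sub_distrib, Finset.mul_sum,
      ← Finset.sum_sub_distrib]
    refine Finset.sum_congr rfl fun i _ => ?_
    ring
  rw [hrw]
  refine Finset.dvd_sum fun i _ => ?_
  refine sq_cong n hodd _ _ ?_
  have hva : ((u+v) i).val = ((u i).val + (v i).val) % (n+1) := by
    simp [ZMod.val_add]
  rw [hva]
  have hmodcast : ((((u i).val + (v i).val) % (n+1) : ℕ) : ℤ)
      = ((((u i).val : ℤ) + ((v i).val : ℤ)) % ((n:ℤ)+1)) := by
    push_cast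
    ring_nf
  rw [hmodcast]
  exact dvd_sub_comm.mp (Int.dvd_self_sub_of_emod_eq rfl)

lemma dot_of_val (n m : ℕ) (u v : Fin m → ZMod (n+1))
    (h : ((n:ℤ)+1) ∣ ∑ i, ((u i).val : ℤ) * ((v i).val : ℤ)) :
    ∑ i, u i * v i = 0 := by
  have heq : (∑ i, u i * v i)
      = ((∑ i, ((u i).val : ℤ) * ((v i).val : ℤ) : ℤ) : ZMod (n+1)) := by
    push_cast
    refine Finset.sum_congr rfl fun i _ => ?_
    simp [ZMod.natCast_val, ZMod.cast_id]
  rw [heq, ZMod.intCast_zmod_eq_zero_iff_dvd]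
  exact_mod_cast h

def eA (n m : ℕ) (i : Fin m) (j : Fin n) (c : ℤ) : Fin m → Fin n → ℤ :=
  fun i' j' => if i' = i ∧ j' = j then c else 0

lemma eA_rowsum (n m : ℕ) (i : Fin m) (j : Fin n) (c : ℤ) (i' : Fin m) :
    ∑ j', eA n m i j c i' j' = if i' = i then c else 0 := by
  simp [eA, ite_and]

lemma rhoA_eA (n m : ℕ) (i : Fin m) (j : Fin n) :
    rhoA n m (eA n m i j ((n:ℤ)+1)) = 0 := by
  funext i'
  simp only [rhoA, eA_rowsum]
  by_cases h : i' = i <;> simp [h]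

lemma BA_eA (n m : ℕ) (z : Fin m → Fin n → ℚ) (i : Fin m) (j : Fin n) :
    BA n m z (toQA n m (eA n m i j ((n:ℤ)+1)))
      = ((n:ℚ)+1) * z i j - ∑ j', z i j' := by
  have hN : ((n : ℚ) + 1) ≠ 0 := by positivity
  unfold BA toQA eA
  push_cast
  rw [Finset.sum_eq_single i]
  · rw [show (∑ j', z i j' * if i = i ∧ j' = j then ((n:ℚ)+1) else 0)
        = ((n:ℚ)+1) * z i j by simp [ite_and, mul_ite]; ring]
    rw [show (∑ j', if i = i ∧ j' = j then ((n:ℚ)+1) else (0:ℚ))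
        = ((n:ℚ)+1) by simp [ite_and]]
    field_simp
  · intro i' _ hi'
    simp [ite_and, hi']
  · intro h
    exact absurd (Finset.mem_univ i) h

def dA (n m : ℕ) (i : Fin m) (j j0 : Fin n) : Fin m → Fin n → ℤ :=
  fun i' j' => (if i' = i ∧ j' = j then 1 else 0) - (if i' = i ∧ j' = j0 then 1 else 0)

lemma dA_rowsum (n m : ℕ) (i : Fin m) (j j0 : Fin n) (i' : Fin m) :
    ∑ j', dA n m i j j0 i' j' = 0 := by
  simp [dA, Finset.sum_sub_distrib, ite_and]

lemma rhoA_dA (n m : ℕ) (i : Fin m) (j j0 : Fin n) :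
    rhoA n m (dA n m i j j0) = 0 := by
  funext i'
  simp [rhoA, dA_rowsum]

lemma BA_dA (n m : ℕ) (z : Fin m → Fin n → ℚ) (i : Fin m) (j j0 : Fin n) :
    BA n m z (toQA n m (dA n m i j j0)) = z i j - z i j0 := by
  unfold BA toQA
  rw [Finset.sum_eq_single i]
  · rw [show (∑ j', (dA n m i j j0 i j' : ℚ)) = 0 by
      exact_mod_cast congrArg (Int.cast : ℤ → ℚ) (dA_rowsum n m i j j0 i)]
    simp only [mul_zero, sub_zero]
    unfold dA
    push_cast
    simp [mul_sub, Finset.sum_sub_distrib, ite_and, mul_ite]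
  · intro i' _ hi'
    rw [show (∑ j', (dA n m i j j0 i' j' : ℚ)) = 0 by
      exact_mod_cast congrArg (Int.cast : ℤ → ℚ) (dA_rowsum n m i j j0 i')]
    unfold dA
    simp [ite_and, hi']
  · intro h
    exact absurd (Finset.mem_univ i) h

lemma dual_int (n m : ℕ) (hn : 0 < n) (C : Set (Fin m → ZMod (n + 1)))
    (hC0 : (0 : Fin m → ZMod (n+1)) ∈ C)
    (z : Fin m → Fin n → ℚ) (hz : z ∈ dualLatticeA n m C) :
    ∃ x : Fin m → Fin n → ℤ, toQA n m x = z := by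
  set R := (Int.castRingHom ℚ).range with hR
  have memR : ∀ q : ℚ, (∃ k : ℤ, (k:ℚ) = q) → q ∈ R := fun q ⟨k, hk⟩ => ⟨k, hk⟩
  have h1 : ∀ i j, ((n:ℚ)+1) * z i j - (∑ j', z i j') ∈ R := by
    intro i j
    have hy : eA n m i j ((n:ℤ)+1) ∈ GammaA n m C := by
      show rhoA n m _ ∈ C
      rw [rhoA_eA]; exact hC0
    have := hz _ hy
    rw [BA_eA] at this
    exact memR _ this
  have h2 : ∀ i (j j0 : Fin n), z i j - z i j0 ∈ R := by
    intro i j j0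
    have hy : dA n m i j j0 ∈ GammaA n m C := by
      show rhoA n m _ ∈ C
      rw [rhoA_dA]; exact hC0
    have := hz _ hy
    rw [BA_dA] at this
    exact memR _ this
  have hS : ∀ i, (∑ j', z i j') ∈ R := by
    intro i
    have hsum : ∑ j, (((n:ℚ)+1) * z i j - (∑ j', z i j')) ∈ R :=
      Subring.sum_mem _ (fun j _ => h1 i j)
    have heq : ∑ j, (((n:ℚ)+1) * z i j - (∑ j', z i j')) = ∑ j', z i j' := by
      rw [Finset.sum_sub_distrib, ← Finset.mul_sum, Finset.sum_const, Finset.card_univ,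
        Fintype.card_fin, nsmul_eq_mul]
      ring
    rwa [heq] at hsum
  set j0 : Fin n := ⟨0, hn⟩ with hj0
  have hz0 : ∀ i, z i j0 ∈ R := by
    intro i
    have hd : ∑ j, (z i j - z i j0) ∈ R := Subring.sum_mem _ (fun j _ => h2 i j j0)
    have hnz : (n:ℚ) * z i j0 ∈ R := by
      have heq : (n:ℚ) * z i j0 = (∑ j', z i j') - ∑ j, (z i j - z i j0) := by
        rw [Finset.sum_sub_distrib, Finset.sum_const, Finset.card_univ,
          Fintype.card_fin, nsmul_eq_mul]
        ring
      rw [heq]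
      exact Subring.sub_mem _ (hS i) hd
    have hNz : ((n:ℚ)+1) * z i j0 ∈ R := by
      have heq : ((n:ℚ)+1) * z i j0
          = (((n:ℚ)+1) * z i j0 - (∑ j', z i j')) + (∑ j', z i j') := by ring
      rw [heq]
      exact Subring.add_mem _ (h1 i j0) (hS i)
    have heq : z i j0 = ((n:ℚ)+1) * z i j0 - (n:ℚ) * z i j0 := by ring
    rw [heq]
    exact Subring.sub_mem _ hNz hnz
  have hall : ∀ i j, ∃ k : ℤ, (k:ℚ) = z i j := by
    intro i j
    have hmem : z i j ∈ R := by
      have heq : z i j = (z i j - z i j0) + z i j0 := by ring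
      rw [heq]
      exact Subring.add_mem _ (h2 i j j0) (hz0 i)
    obtain ⟨k, hk⟩ := hmem
    exact ⟨k, hk⟩
  choose x hx using hall
  exact ⟨fun i j => x i j, by funext i j; exact hx i j⟩

theorem stmt4 (n m : ℕ) (hn : 0 < n) (hodd : Odd n) (hm : 0 < m)
    (C : Submodule (ZMod (n + 1)) (Fin m → ZMod (n + 1))) :
    (IsIntegralA n m (C : Set _) ↔
        (C : Set _) ⊆ dualCodeA n m (C : Set _)) ∧
    (IsUnimodularA n m (C : Set _) ↔
        (C : Set _) = dualCodeA n m (C : Set _)) ∧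
    (IsEvenLatA n m (C : Set _) ↔
        ∀ u ∈ C, 2 * (n + 1) ∣ wtE n m u) ∧
    ((IsEvenLatA n m (C : Set _) ∧ IsUnimodularA n m (C : Set _)) ↔
        ((C : Set _) = dualCodeA n m (C : Set _) ∧
          ∀ u ∈ C, 2 * (n + 1) ∣ wtE n m u)) := by
  have hC0 : (0 : Fin m → ZMod (n+1)) ∈ (C : Set _) := C.zero_mem
  have hliftmem : ∀ u ∈ (C : Set _), liftA n m hn u ∈ GammaA n m (C : Set _) := by
    intro u hu
    show rhoA n m _ ∈ (C : Set _)
    rw [rhoA_liftA]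
    exact hu
  have hpair : ∀ x y : Fin m → Fin n → ℤ,
      (∃ k : ℤ, (k:ℚ) = BA n m (toQA n m x) (toQA n m y)) ↔
        ∑ i, rhoA n m x i * rhoA n m y i = 0 :=
    fun x y => (int_iff n m x y).trans (dot_zero_iff n m x y).symm
  -- Part 1
  have part1 : IsIntegralA n m (C : Set _) ↔
      (C : Set _) ⊆ dualCodeA n m (C : Set _) := by
    constructor
    · intro h u hu v hv
      have hB := h _ (hliftmem u hu) _ (hliftmem v hv)
      rw [hpair, rhoA_liftA, rhoA_liftA] at hB
      exact hB
    · intro h x hx y hy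
      rw [hpair]
      exact h hx _ hy
  -- coprimality
  have hcopnat : Nat.Coprime (2*(n+1)) n := by
    have hodd' : n % 2 = 1 := Nat.odd_iff.mp hodd
    have h2 : Nat.Coprime 2 n :=
      (Nat.Prime.coprime_iff_not_dvd Nat.prime_two).mpr (by omega)
    have hn1 : Nat.Coprime (n+1) n :=
      Nat.coprime_self_add_left.mpr (Nat.coprime_one_left n)
    exact Nat.Coprime.mul h2 hn1
  -- diagonal evenness criterion
  have hdiag : ∀ x : Fin m → Fin n → ℤ,
      (∃ k : ℤ, ((2*k:ℤ):ℚ) = BA n m (toQA n m x) (toQA n m x)) ↔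
        2*(n+1) ∣ n * wtE n m (rhoA n m x) := by
    intro x
    rw [even_iff' n m x]
    have hw := wt_cong n m hodd x
    constructor
    · intro h
      have hdv : (2*((n:ℤ)+1)) ∣ (n:ℤ) * (wtE n m (rhoA n m x) : ℤ) := by
        have := dvd_sub h hw
        simpa using this
      exact_mod_cast hdv
    · intro h
      have h' : (2*((n:ℤ)+1)) ∣ (n:ℤ) * (wtE n m (rhoA n m x) : ℤ) := by
        exact_mod_cast h
      have := dvd_add hw h'
      simpa using this
  -- weight condition implies self-orthogonality
  have hwt_sub : (∀ u ∈ C, 2 * (n + 1) ∣ wtE n m u) →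
      (C : Set _) ⊆ dualCodeA n m (C : Set _) := by
    intro h u hu v hv
    have huv : u + v ∈ C := C.add_mem hu hv
    have h1 := h u hu
    have h2 := h v hv
    have h3 := h (u+v) huv
    have hp := polar n m hodd u v
    have hdot : (2*((n:ℤ)+1)) ∣ 2 * ∑ i, ((u i).val : ℤ) * ((v i).val : ℤ) := by
      have c1 : (2*((n:ℤ)+1)) ∣ (wtE n m (u+v) : ℤ) := by exact_mod_cast h3
      have c2 : (2*((n:ℤ)+1)) ∣ (wtE n m u : ℤ) := by exact_mod_cast h1
      have c3 : (2*((n:ℤ)+1)) ∣ (wtE n m v : ℤ) := by exact_mod_cast h2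
      have := dvd_sub (dvd_sub (dvd_sub c1 c2) c3) hp
      simpa using this
    have hNdot : ((n:ℤ)+1) ∣ ∑ i, ((u i).val : ℤ) * ((v i).val : ℤ) := by
      obtain ⟨t, ht⟩ := hdot
      exact ⟨t, by linarith⟩
    exact dot_of_val n m u v hNdot
  -- Part 3
  have part3 : IsEvenLatA n m (C : Set _) ↔
      ∀ u ∈ C, 2 * (n + 1) ∣ wtE n m u := by
    constructor
    · rintro ⟨hint, hev⟩ u hu
      have := hev _ (hliftmem u hu)
      rw [hdiag, rhoA_liftA] at this
      exact (Nat.Coprime.dvd_of_dvd_mul_left hcopnat this)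
    · intro h
      refine ⟨part1.mpr (hwt_sub h), ?_⟩
      intro x hx
      rw [hdiag]
      exact Dvd.dvd.mul_left (h _ hx) n
  -- Part 2
  have part2 : IsUnimodularA n m (C : Set _) ↔
      (C : Set _) = dualCodeA n m (C : Set _) := by
    constructor
    · intro h
      apply Set.Subset.antisymm
      · intro v hv w hw
        have hmem : toQA n m (liftA n m hn v) ∈ dualLatticeA n m (C : Set _) := by
          rw [h]
          exact ⟨_, hliftmem v hv, rfl⟩
        have hB := hmem _ (hliftmem w hw)
        rw [hpair, rhoA_liftA, rhoA_liftA] at hB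
        exact hB
      · intro u hu
        have hdl : toQA n m (liftA n m hn u) ∈ dualLatticeA n m (C : Set _) := by
          intro y hy
          rw [hpair, rhoA_liftA]
          exact hu _ hy
        rw [h] at hdl
        obtain ⟨x, hxG, hxe⟩ := hdl
        have hxl : x = liftA n m hn u := by
          funext i j
          have h := congrFun (congrFun hxe i) j
          simp only [toQA] at h
          exact_mod_cast h
        rw [hxl] at hxG
        have : rhoA n m (liftA n m hn u) ∈ (C : Set _) := hxG
        rwa [rhoA_liftA] at this
    · intro hCd
      unfold IsUnimodularA
      ext z
      constructor
      · intro hz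
        obtain ⟨x, hx⟩ := dual_int n m hn _ hC0 z hz
        refine ⟨x, ?_, hx⟩
        show rhoA n m x ∈ (C : Set _)
        rw [hCd]
        intro v hv
        have hB := hz _ (hliftmem v hv)
        rw [← hx, hpair, rhoA_liftA] at hB
        exact hB
      · rintro ⟨x, hxG, rfl⟩
        intro y hy
        rw [hpair]
        have hxd : rhoA n m x ∈ dualCodeA n m (C : Set _) := hCd ▸ hxG
        exact hxd _ hy
  refine ⟨part1, part2, part3, ?_⟩
  constructor
  · rintro ⟨he, hu⟩
    exact ⟨part2.mp hu, part3.mp he⟩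
  · rintro ⟨hc, hw⟩
    exact ⟨part3.mpr hw, part2.mpr hc⟩
end

section
/- Let n ≥ 5 be an odd integer, m a positive integer, and x, y : Fin m → Fin n → ℤ. Then B(x,y) ∈ ℤ if and only if ρ(x)·ρ(y) = 0 in ZMod 4, and B(x,x) ∈ 2ℤ if and only if 8 divides wt_E(ρ(x)). -/
/-! Write `4 g(l) = (-1)^l (n - 2l)`. For odd `n` this integer is `≡ n (mod 4)` and is invariant
under `l ↦ n - l`, so `4 B(x,y) ≡ n ρ(x)·ρ(y) (mod 4)`. For `x = y`, the kernel `4 g - n` vanishes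
on the diagonal and is alternating modulo 8 (each symmetric pair of off-diagonal terms contributes
twice a multiple of 4), so `4 B(x,x) ≡ n Σᵢ (Σⱼ xᵢⱼ)² (mod 8)`; a square modulo 8 only depends on
its root modulo 4. Since `n` is a unit modulo 8, both equivalences follow. -/

open Finset

/-- The coefficient `g(l) = (1/4)(−1)^l (n − 2l)`. -/
noncomputable def gD (n : ℕ) (l : Fin n) : ℚ :=
  (1 / 4) * (-1 : ℚ) ^ (l : ℕ) * ((n : ℚ) - 2 * (l : ℕ))

/-- The bilinear form of `m` copies of the dual `D_n` root lattice (`n` odd),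
written in the dual basis: `B(x,y) = Σ_i Σ_j Σ_s g((s−j) mod n) x_{ij} y_{is}`. -/
noncomputable def BDodd (n m : ℕ) (x y : Fin m → Fin n → ℚ) : ℚ :=
  ∑ i, ∑ j, ∑ s, gD n (s - j) * x i j * y i s

/-- The reduction map to `(ℤ/4ℤ)^m`. -/
def rhoDodd (n m : ℕ) (x : Fin m → Fin n → ℤ) : Fin m → ZMod 4 :=
  fun i => ((∑ j, x i j : ℤ) : ZMod 4)

/-- The Euclidean weight of an element of `(ℤ/4ℤ)^m`. -/
def wtE4 (m : ℕ) (u : Fin m → ZMod 4) : ℕ :=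
  ∑ i, (u i).val ^ 2

theorem sum_sum_mul_mul_eq_zero_of_alternating {ι R : Type*} [Fintype ι] [CommRing R]
    (d : ι → ι → R) (hdiag : ∀ j, d j j = 0) (hskew : ∀ j s, d j s + d s j = 0) (v : ι → R) :
    ∑ j, ∑ s, d j s * v j * v s = 0 := by
  rw [← sum_product']
  refine sum_ninvolution Prod.swap (fun p => ?_) (fun p hp => ?_) (fun _ => mem_univ _)
    Prod.swap_swap
  · simp only [Prod.fst_swap, Prod.snd_swap]
    linear_combination (v p.1 * v p.2) * hskew p.1 p.2
  · rintro h
    obtain ⟨j, s⟩ := p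
    obtain rfl : s = j := congrArg Prod.fst h
    simp [hdiag] at hp

theorem Int.sq_modEq_sq_of_modEq {k a b : ℤ} (hk : Even k) (hab : a ≡ b [ZMOD k]) :
    a ^ 2 ≡ b ^ 2 [ZMOD 2 * k] := by
  obtain ⟨t, ht⟩ := Int.modEq_iff_dvd.1 hab
  obtain ⟨r, rfl⟩ := hk
  rw [Int.modEq_iff_dvd]
  exact ⟨a * t + r * t ^ 2, by rw [show b = a + (r + r) * t by linarith]; ring⟩

def gNum (n l : ℕ) : ℤ := (-1) ^ l * ((n : ℤ) - 2 * l)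

lemma gD_eq_gNum_div_four (n : ℕ) (l : Fin n) : gD n l = gNum n l / 4 := by
  simp only [gD, gNum]; push_cast; ring

lemma gNum_zero (n : ℕ) : gNum n 0 = n := by simp [gNum]

lemma gNum_modEq_four {n : ℕ} (hodd : Odd n) (l : ℕ) : gNum n l ≡ n [ZMOD 4] := by
  obtain ⟨a, rfl⟩ := hodd
  rw [Int.modEq_iff_dvd]
  rcases Nat.even_or_odd' l with ⟨b, rfl | rfl⟩
  · exact ⟨b, by simp [gNum, pow_mul]; ring⟩
  · exact ⟨a - b, by simp [gNum, pow_succ, pow_mul]; ring⟩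

lemma gNum_sub {n l : ℕ} (hodd : Odd n) (hl : l ≤ n) : gNum n (n - l) = gNum n l := by
  have hsign : (-1 : ℤ) ^ (n - l) = -(-1) ^ l := by
    rw [← mul_right_inj' (pow_ne_zero l (neg_ne_zero.2 one_ne_zero)), ← pow_add,
      Nat.add_sub_cancel' hl, hodd.neg_one_pow, mul_neg, ← pow_add, ← two_mul, pow_mul,
      neg_one_sq, one_pow]
  rw [gNum, gNum, hsign, Nat.cast_sub hl]; ring

lemma gNum_val_neg {n : ℕ} [NeZero n] (hodd : Odd n) (t : Fin n) :
    gNum n (-t : Fin n).val = gNum n t.val := by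
  rw [Fin.val_neg]
  split_ifs with ht
  · simp [ht]
  · exact gNum_sub hodd t.isLt.le

def dualNum (n : ℕ) (v w : Fin n → ℤ) : ℤ :=
  ∑ j, ∑ s, gNum n (s - j : Fin n).val * v j * w s

lemma BDodd_intCast (n m : ℕ) (x y : Fin m → Fin n → ℤ) :
    BDodd n m (fun i j => (x i j : ℚ)) (fun i j => (y i j : ℚ)) =
      ((∑ i, dualNum n (x i) (y i) : ℤ) : ℚ) / 4 := by
  simp only [BDodd, dualNum, gD_eq_gNum_div_four, Int.cast_sum, Int.cast_mul, sum_div,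
    div_mul_eq_mul_div]

lemma dualNum_intCast_zmod_four {n : ℕ} (hodd : Odd n) (v w : Fin n → ℤ) :
    (dualNum n v w : ZMod 4) = n * ((∑ j, v j : ℤ) : ZMod 4) * ((∑ s, w s : ℤ) : ZMod 4) := by
  have hg (l : ℕ) : (gNum n l : ZMod 4) = n := by
    exact_mod_cast (ZMod.intCast_eq_intCast_iff _ _ 4).2 (gNum_modEq_four hodd l)
  simp only [dualNum, Int.cast_sum, Int.cast_mul, hg]
  rw [mul_assoc, sum_mul_sum, mul_sum]
  simp only [mul_sum, mul_assoc]

lemma dualNum_self_intCast_zmod_eight {n : ℕ} [NeZero n] (hodd : Odd n) (v : Fin n → ℤ) :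
    (dualNum n v v : ZMod 8) = n * ((∑ j, v j : ℤ) : ZMod 8) ^ 2 := by
  set d : Fin n → Fin n → ZMod 8 := fun j s => ((gNum n (s - j : Fin n).val - n : ℤ) : ZMod 8)
  have hdiag (j : Fin n) : d j j = 0 := by simp [d, gNum_zero]
  have hskew (j s : Fin n) : d j s + d s j = 0 := by
    obtain ⟨c, hc⟩ := (gNum_modEq_four hodd (s - j : Fin n).val).symm.dvd
    have : (d j s + d s j : ZMod 8) = ((8 * c : ℤ) : ZMod 8) := by
      simp only [d, ← neg_sub s j, gNum_val_neg hodd, hc]; push_cast; ring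
    rw [this, ZMod.intCast_zmod_eq_zero_iff_dvd]
    exact dvd_mul_right 8 c
  have hoff := sum_sum_mul_mul_eq_zero_of_alternating d hdiag hskew (fun j => (v j : ZMod 8))
  calc (dualNum n v v : ZMod 8)
      = ∑ j, ∑ s, (d j s + n) * v j * v s := by simp [dualNum, d]
    _ = ∑ j, ∑ s, d j s * v j * v s + n * (∑ j, (v j : ZMod 8)) ^ 2 := by
      rw [sq, sum_mul_sum, mul_sum]
      simp only [add_mul, sum_add_distrib, mul_sum, mul_assoc]
    _ = n * ((∑ j, v j : ℤ) : ZMod 8) ^ 2 := by rw [hoff, zero_add, Int.cast_sum]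

lemma exists_intCast_eq_div_four_iff (N : ℤ) :
    (∃ k : ℤ, (k : ℚ) = N / 4) ↔ (N : ZMod 4) = 0 := by
  rw [ZMod.intCast_zmod_eq_zero_iff_dvd]
  refine ⟨fun ⟨k, hk⟩ => ⟨k, ?_⟩, fun ⟨k, hk⟩ => ⟨k, ?_⟩⟩
  · rw [eq_div_iff four_ne_zero] at hk; exact_mod_cast (by linarith : (N : ℚ) = 4 * k)
  · rw [hk]; push_cast; ring

lemma exists_two_mul_intCast_eq_div_four_iff (N : ℤ) :
    (∃ k : ℤ, ((2 * k : ℤ) : ℚ) = N / 4) ↔ (N : ZMod 8) = 0 := by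
  rw [ZMod.intCast_zmod_eq_zero_iff_dvd]
  refine ⟨fun ⟨k, hk⟩ => ⟨k, ?_⟩, fun ⟨k, hk⟩ => ⟨k, ?_⟩⟩
  · rw [eq_div_iff four_ne_zero] at hk
    push_cast at hk
    exact_mod_cast (by linarith : (N : ℚ) = 8 * k)
  · rw [hk]; push_cast; ring

lemma intCast_sq_zmod_eight (S : ℤ) : (S : ZMod 8) ^ 2 = (((S : ZMod 4).val ^ 2 : ℕ) : ZMod 8) := by
  have hS : S ≡ ((S : ZMod 4).val : ℤ) [ZMOD 4] := by
    rw [ZMod.val_intCast]; exact (Int.mod_modEq S 4).symm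
  have := (ZMod.intCast_eq_intCast_iff _ _ 8).2 (Int.sq_modEq_sq_of_modEq ⟨2, rfl⟩ hS)
  push_cast at this
  exact_mod_cast this

lemma sum_dualNum_intCast_zmod_four {n m : ℕ} (hodd : Odd n) (x y : Fin m → Fin n → ℤ) :
    ((∑ i, dualNum n (x i) (y i) : ℤ) : ZMod 4) = n * ∑ i, rhoDodd n m x i * rhoDodd n m y i := by
  rw [Int.cast_sum, mul_sum]
  refine sum_congr rfl fun i _ => ?_
  rw [dualNum_intCast_zmod_four hodd, mul_assoc]; rfl

lemma sum_dualNum_self_intCast_zmod_eight {n m : ℕ} [NeZero n] (hodd : Odd n)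
    (x : Fin m → Fin n → ℤ) :
    ((∑ i, dualNum n (x i) (x i) : ℤ) : ZMod 8) = n * wtE4 m (rhoDodd n m x) := by
  rw [Int.cast_sum, wtE4, Nat.cast_sum, mul_sum]
  refine sum_congr rfl fun i _ => ?_
  rw [dualNum_self_intCast_zmod_eight hodd, intCast_sq_zmod_eight, rhoDodd]

theorem stmt7_general (n m : ℕ) (hodd : Odd n)
    (x y : Fin m → Fin n → ℤ) :
    ((∃ k : ℤ, (k : ℚ) =
        BDodd n m (fun i j => (x i j : ℚ)) (fun i j => (y i j : ℚ))) ↔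
      ∑ i, rhoDodd n m x i * rhoDodd n m y i = 0) ∧
    ((∃ k : ℤ, ((2 * k : ℤ) : ℚ) =
        BDodd n m (fun i j => (x i j : ℚ)) (fun i j => (x i j : ℚ))) ↔
      8 ∣ wtE4 m (rhoDodd n m x)) := by
  have : NeZero n := ⟨hodd.pos.ne'⟩
  have hn4 : IsUnit (n : ZMod 4) :=
    (ZMod.isUnit_iff_coprime n 4).2 (hodd.coprime_two_right.pow_right 2)
  have hn8 : IsUnit (n : ZMod 8) :=
    (ZMod.isUnit_iff_coprime n 8).2 (hodd.coprime_two_right.pow_right 3)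
  simp only [BDodd_intCast]
  rw [exists_intCast_eq_div_four_iff, sum_dualNum_intCast_zmod_four hodd, hn4.mul_right_eq_zero,
    exists_two_mul_intCast_eq_div_four_iff, sum_dualNum_self_intCast_zmod_eight hodd,
    hn8.mul_right_eq_zero, ZMod.natCast_eq_zero_iff]
  exact ⟨Iff.rfl, Iff.rfl⟩

theorem stmt7 (n m : ℕ) (hn : 5 ≤ n) (hodd : Odd n) (hm : 0 < m)
    (x y : Fin m → Fin n → ℤ) :
    ((∃ k : ℤ, (k : ℚ) =
        BDodd n m (fun i j => (x i j : ℚ)) (fun i j => (y i j : ℚ))) ↔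
      ∑ i, rhoDodd n m x i * rhoDodd n m y i = 0) ∧
    ((∃ k : ℤ, ((2 * k : ℤ) : ℚ) =
        BDodd n m (fun i j => (x i j : ℚ)) (fun i j => (x i j : ℚ))) ↔
      8 ∣ wtE4 m (rhoDodd n m x)) :=
  stmt7_general n m hodd x y
end

section
/- Let n ≥ 5 be an odd integer, m a positive integer, and C a code of length m over ℤ/4ℤ. Then: (1) Γ_C is integral if and only if C ⊆ C^⊥; (2) Γ_C is unimodular if and only if C = C^⊥; (3) Γ_C is even if and only if 8 divides wt_E(u) for every u ∈ C; (4) Γ_C is even unimodular if and only if C is Type II. -/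
open Finset

/-- The dual code of a set of codewords over `ℤ/4ℤ`. -/
def dualCode4 (m : ℕ) (C : Set (Fin m → ZMod 4)) : Set (Fin m → ZMod 4) :=
  {u | ∀ v ∈ C, ∑ i, u i * v i = 0}

/-- The lattice `Γ_C` constructed from the code `C`. -/
def GammaD (n m : ℕ) (C : Set (Fin m → ZMod 4)) : Set (Fin m → Fin n → ℤ) :=
  {x | rhoDodd n m x ∈ C}

/-- Coercion of an integral vector to a rational vector. -/
def toQD (n m : ℕ) (x : Fin m → Fin n → ℤ) : Fin m → Fin n → ℚ :=
  fun i j => (x i j : ℚ)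

/-- The dual lattice `Γ_C^*`, taken inside the `ℚ`-valued vectors. -/
noncomputable def dualLatticeD (n m : ℕ) (C : Set (Fin m → ZMod 4)) :
    Set (Fin m → Fin n → ℚ) :=
  {z | ∀ y ∈ GammaD n m C, ∃ k : ℤ, (k : ℚ) = BDodd n m z (toQD n m y)}

/-- `Γ_C` is integral. -/
def IsIntegralD (n m : ℕ) (C : Set (Fin m → ZMod 4)) : Prop :=
  ∀ x ∈ GammaD n m C, ∀ y ∈ GammaD n m C,
    ∃ k : ℤ, (k : ℚ) = BDodd n m (toQD n m x) (toQD n m y)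

/-- `Γ_C` is even. -/
def IsEvenLatD (n m : ℕ) (C : Set (Fin m → ZMod 4)) : Prop :=
  IsIntegralD n m C ∧ ∀ x ∈ GammaD n m C,
    ∃ k : ℤ, ((2 * k : ℤ) : ℚ) = BDodd n m (toQD n m x) (toQD n m x)

/-- `Γ_C` is unimodular. -/
def IsUnimodularD (n m : ℕ) (C : Set (Fin m → ZMod 4)) : Prop :=
  dualLatticeD n m C = toQD n m '' GammaD n m C

/-!
Write `g(l) = n/4 + c(l)` with `c` integral, symmetric and `c(0) = 0`. Then
`B(x, y) = (n/4) Σᵢ σᵢ(x) σᵢ(y) + (an integer)`, where `σᵢ` is the `i`-th block sum, and that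
integer is even when `x = y`. Since `n` is odd, `B(x, y) ∈ ℤ` iff `ρ(x) · ρ(y) = 0`, and
`B(x, x) ∈ 2ℤ` iff `8 ∣ wt_E(ρ(x))`; as `ρ` is onto, this gives (1) and (3), using for (3) that
`wt_E(u + v) ≡ wt_E(u) + wt_E(v) + 2 u · v (mod 8)`, so a doubly even code is self-orthogonal.

For (2), the circulant matrix with entries `2, 1, 1` at offsets `0, ±1` inverts `(g(s - j))` and
has row sums `4`. Testing `z ∈ Γ_C^*` against `4 e_{is}` and `e_{is} - e_{i0}`, which lie in `Γ_C`
because `ρ` kills them, therefore shows that `z` is integral, and then `Γ_C^* = Γ_{C^⊥}`.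
-/

section Arithmetic

lemma eight_dvd_sq_sub_sq {p q : ℤ} (h : 4 ∣ p - q) : 8 ∣ p ^ 2 - q ^ 2 := by
  have h2 : (2 : ℤ) ∣ p + q := by
    rw [show p + q = (p - q) + 2 * q by ring]
    exact dvd_add ((show (2 : ℤ) ∣ 4 by norm_num).trans h) (dvd_mul_right 2 q)
  rw [sq_sub_sq, mul_comm]
  exact mul_dvd_mul h h2

lemma four_dvd_sub_val {a : ℤ} {u : ZMod 4} (h : (a : ZMod 4) = u) : 4 ∣ a - u.val :=
  (ZMod.intCast_eq_intCast_iff_dvd_sub _ _ 4).mp (by simp [h])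

lemma two_dvd_sum_mul_mul_of_symm {ι : Type*} [Fintype ι] [LinearOrder ι] (M : ι → ι → ℤ)
    (hsymm : ∀ j s, M j s = M s j) (hdiag : ∀ j, M j j = 0) (x : ι → ℤ) :
    2 ∣ ∑ j, ∑ s, M j s * x j * x s := by
  set f : ι → ι → ℤ := fun j s => if j < s then M j s * x j * x s else 0
  have hsplit : ∀ j s, M j s * x j * x s = f j s + f s j := by
    intro j s
    rcases lt_trichotomy j s with h | rfl | h
    · simp [f, h, h.not_gt]
    · simp [f, hdiag]
    · simp [f, h, h.not_gt, hsymm j s]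
      ring
  refine ⟨∑ j, ∑ s, f j s, ?_⟩
  simp_rw [hsplit, sum_add_distrib]
  rw [sum_comm (f := fun j s => f s j)]
  ring

lemma isCoprime_two_pow_of_odd {n : ℕ} (hodd : Odd n) (e : ℕ) : IsCoprime ((2 : ℤ) ^ e) n :=
  (Int.isCoprime_two_left.mpr (by exact_mod_cast hodd.natCast)).pow_left

lemma exists_int_mul_eq_quarter_mul_add_iff {n : ℕ} {d S K : ℤ} (hcop : IsCoprime (4 * d) n) :
    (∃ k : ℤ, ((d * k : ℤ) : ℚ) = n / 4 * S + (d * K : ℤ)) ↔ 4 * d ∣ S := by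
  constructor
  · rintro ⟨k, hk⟩
    have h : (n * S : ℤ) = 4 * d * (k - K) := by
      have hq : ((n * S : ℤ) : ℚ) = ((4 * d * (k - K) : ℤ) : ℚ) := by
        push_cast at hk ⊢
        linarith
      exact_mod_cast hq
    exact hcop.dvd_of_dvd_mul_left ⟨_, h⟩
  · rintro ⟨t, rfl⟩
    exact ⟨n * t + K, by push_cast; ring⟩

end Arithmetic

section Coefficients

variable {n : ℕ}

lemma gD_neg [NeZero n] (hodd : Odd n) (l : Fin n) : gD n (-l) = gD n l := by
  rcases eq_or_ne l 0 with rfl | hl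
  · rw [neg_zero]
  obtain ⟨r, hr⟩ : ∃ r, n = l + r := ⟨n - l, by omega⟩
  have hsign : (-1 : ℚ) ^ r = -(-1) ^ (l : ℕ) := by
    have h : (-1 : ℚ) ^ n = -1 := hodd.neg_one_pow
    rw [hr, pow_add] at h
    rcases neg_one_pow_eq_or ℚ (l : ℕ) with h' | h' <;> rw [h'] at h ⊢ <;> linarith
  have hnq : (n : ℚ) = l + r := by exact_mod_cast hr
  rw [gD, gD, Fin.val_neg, if_neg hl, show n - l = r by omega, hsign, hnq]
  ring

lemma four_dvd_neg_one_pow_mul_sub (hodd : Odd n) (k : ℕ) :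
    (4 : ℤ) ∣ (-1) ^ k * ((n : ℤ) - 2 * k) - n := by
  obtain ⟨b, rfl⟩ := hodd
  rcases Nat.even_or_odd' k with ⟨a, rfl | rfl⟩
  · exact ⟨-a, by rw [pow_mul]; push_cast; ring⟩
  · exact ⟨a - b, by rw [pow_succ, pow_mul]; push_cast; ring⟩

def gDOffset (n : ℕ) (l : Fin n) : ℤ :=
  ((-1) ^ (l : ℕ) * ((n : ℤ) - 2 * (l : ℕ)) - n) / 4

lemma gD_eq_add_gDOffset (hodd : Odd n) (l : Fin n) : gD n l = n / 4 + gDOffset n l := by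
  have h : gDOffset n l * 4 = (-1) ^ (l : ℕ) * ((n : ℤ) - 2 * (l : ℕ)) - n :=
    Int.ediv_mul_cancel (four_dvd_neg_one_pow_mul_sub hodd l)
  have hq : (gDOffset n l : ℚ) * 4 = (-1) ^ (l : ℕ) * ((n : ℚ) - 2 * (l : ℕ)) - n := by
    exact_mod_cast h
  rw [gD]
  linarith

lemma gDOffset_zero [NeZero n] : gDOffset n 0 = 0 := by
  simp [gDOffset]

lemma gDOffset_neg [NeZero n] (hodd : Odd n) (l : Fin n) : gDOffset n (-l) = gDOffset n l := by
  have h := gD_neg hodd l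
  rw [gD_eq_add_gDOffset hodd, gD_eq_add_gDOffset hodd, add_right_inj] at h
  exact_mod_cast h

lemma gD_second_difference [NeZero n] (hodd : Odd n) (d : Fin n) :
    2 * gD n d + gD n (d + 1) + gD n (d - 1) = if d = 0 then 1 else 0 := by
  obtain ⟨N, rfl⟩ : ∃ N, n = N + 1 := ⟨n - 1, by have := NeZero.ne n; omega⟩
  have hN : Even N := by simpa [Nat.odd_add_one] using hodd
  -- On `ℤ` the formula for `g` satisfies `2 g(k) + g(k + 1) + g(k - 1) = 0`. Reducing mod `n` is
  -- harmless at `k + 1 = n`, as `g(n) = g(0)` for odd `n`, and adds `1` at `k - 1 = -1`.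
  have hsucc : gD (N + 1) (d + 1)
      = 1 / 4 * (-1) ^ ((d : ℕ) + 1) * ((N + 1 : ℕ) - 2 * ((d : ℕ) + 1 : ℕ)) := by
    rw [gD, Fin.val_add_one]
    split_ifs with h
    · subst h
      rw [Fin.val_last, pow_succ, hN.neg_one_pow]
      push_cast
      ring
    · rfl
  rw [hsucc, gD, gD, Fin.coe_sub_one]
  split_ifs with h
  · subst h
    rw [Fin.val_zero, hN.neg_one_pow]
    push_cast
    ring
  · obtain ⟨k, hk⟩ : ∃ k, (d : ℕ) = k + 1 :=
      ⟨d - 1, by have := Fin.val_ne_zero_iff.mpr h; omega⟩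
    rw [hk, Nat.add_sub_cancel, pow_succ, pow_succ]
    push_cast
    ring

lemma sum_gD_inverse [NeZero n] (hodd : Odd n) (f : Fin n → ℚ) (j : Fin n) :
    2 * ∑ t, gD n (j - t) * f t + ∑ t, gD n (j + 1 - t) * f t + ∑ t, gD n (j - 1 - t) * f t
      = f j := by
  simp_rw [mul_sum, ← sum_add_distrib, add_sub_right_comm j 1, sub_right_comm j 1, ← mul_assoc,
    ← add_mul, gD_second_difference hodd, sub_eq_zero, ite_mul, one_mul, zero_mul]
  simp

end Coefficients

section Form

variable {n m : ℕ}

lemma BDodd_toQD (hodd : Odd n) (x y : Fin m → Fin n → ℤ) :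
    BDodd n m (toQD n m x) (toQD n m y)
      = n / 4 * ((∑ i, (∑ j, x i j) * ∑ j, y i j : ℤ) : ℚ)
        + ((∑ i, ∑ j, ∑ s, gDOffset n (s - j) * x i j * y i s : ℤ) : ℚ) := by
  simp only [BDodd, toQD, gD_eq_add_gDOffset hodd]
  push_cast
  rw [mul_sum, ← sum_add_distrib]
  refine sum_congr rfl fun i _ => ?_
  rw [sum_mul_sum, mul_sum, ← sum_add_distrib]
  refine sum_congr rfl fun j _ => ?_
  rw [mul_sum, ← sum_add_distrib]
  exact sum_congr rfl fun s _ => by ring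

lemma intCast_sum_mul_sum (x y : Fin m → Fin n → ℤ) :
    ((∑ i, (∑ j, x i j) * ∑ j, y i j : ℤ) : ZMod 4)
      = ∑ i, rhoDodd n m x i * rhoDodd n m y i := by
  simp [rhoDodd]

lemma exists_int_eq_BDodd_iff (hodd : Odd n) (x y : Fin m → Fin n → ℤ) :
    (∃ k : ℤ, (k : ℚ) = BDodd n m (toQD n m x) (toQD n m y))
      ↔ ∑ i, rhoDodd n m x i * rhoDodd n m y i = 0 := by
  rw [BDodd_toQD hodd, ← intCast_sum_mul_sum, ZMod.intCast_zmod_eq_zero_iff_dvd]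
  have hcop : IsCoprime (4 * 1 : ℤ) n := by simpa using isCoprime_two_pow_of_odd hodd 2
  simpa only [one_mul, mul_one, Nat.cast_ofNat] using exists_int_mul_eq_quarter_mul_add_iff
    (S := ∑ i, (∑ j, x i j) * ∑ j, y i j)
    (K := ∑ i, ∑ j, ∑ s, gDOffset n (s - j) * x i j * y i s) hcop

lemma eight_dvd_sum_sq_sub_wtE4 (x : Fin m → Fin n → ℤ) :
    8 ∣ ∑ i, (∑ j, x i j) * (∑ j, x i j) - wtE4 m (rhoDodd n m x) := by
  simp only [wtE4, Nat.cast_sum, Nat.cast_pow, ← sum_sub_distrib, ← sq]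
  exact dvd_sum fun i _ => eight_dvd_sq_sub_sq (four_dvd_sub_val (by simp [rhoDodd]))

lemma exists_two_mul_eq_BDodd_iff (hodd : Odd n) (x : Fin m → Fin n → ℤ) :
    (∃ k : ℤ, ((2 * k : ℤ) : ℚ) = BDodd n m (toQD n m x) (toQD n m x))
      ↔ 8 ∣ wtE4 m (rhoDodd n m x) := by
  have : NeZero n := ⟨hodd.pos.ne'⟩
  obtain ⟨K, hK⟩ : 2 ∣ ∑ i, ∑ j, ∑ s, gDOffset n (s - j) * x i j * x i s :=
    dvd_sum fun i _ => two_dvd_sum_mul_mul_of_symm (fun j s => gDOffset n (s - j))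
      (fun j s => by rw [← neg_sub, gDOffset_neg hodd]) (fun j => by rw [sub_self, gDOffset_zero])
      (x i)
  have hcop : IsCoprime (4 * 2 : ℤ) n := by simpa using isCoprime_two_pow_of_odd hodd 3
  rw [BDodd_toQD hodd, hK, exists_int_mul_eq_quarter_mul_add_iff hcop,
    show (4 * 2 : ℤ) = 8 by rfl, dvd_iff_dvd_of_dvd_sub (eight_dvd_sum_sq_sub_wtE4 x)]
  exact_mod_cast Iff.rfl

end Form

section Lattice

variable {n m : ℕ}

lemma rhoDodd_surjective [NeZero n] : Function.Surjective (rhoDodd n m) := fun u =>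
  ⟨fun i => Pi.single 0 ((u i).val : ℤ), funext fun i => by simp [rhoDodd]⟩

lemma forall_mem_GammaD_iff [NeZero n] {C : Set (Fin m → ZMod 4)}
    {P : (Fin m → ZMod 4) → Prop} :
    (∀ x ∈ GammaD n m C, P (rhoDodd n m x)) ↔ ∀ u ∈ C, P u := by
  refine ⟨fun h u hu => ?_, fun h x hx => h _ hx⟩
  obtain ⟨x, rfl⟩ := rhoDodd_surjective (n := n) u
  exact h x hu

lemma GammaD_injective [NeZero n] : Function.Injective (GammaD n m) := by
  intro C D h
  ext u
  obtain ⟨x, rfl⟩ := rhoDodd_surjective (n := n) u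
  exact Set.ext_iff.mp h x

lemma toQD_injective : Function.Injective (toQD n m) :=
  fun x y h => funext₂ fun i j => by simpa [toQD] using congr_fun₂ h i j

lemma rhoDodd_single (i : Fin m) (v : Fin n → ℤ) :
    rhoDodd n m (Pi.single i v) = Pi.single i ((∑ j, v j : ℤ) : ZMod 4) := by
  ext i'
  rcases eq_or_ne i' i with rfl | h
  · simp [rhoDodd]
  · simp [rhoDodd, h]

lemma BDodd_toQD_single (z : Fin m → Fin n → ℚ) (i : Fin m) (v : Fin n → ℤ) :
    BDodd n m z (toQD n m (Pi.single i v)) = ∑ s, (∑ j, gD n (s - j) * z i j) * v s := by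
  rw [BDodd, sum_eq_single i (fun i' _ hi' => by simp [toQD, hi']) (by simp), sum_comm]
  simp [toQD, sum_mul, mul_assoc]

lemma exists_toQD_eq_of_forall_int [NeZero n] (hodd : Odd n) (z : Fin m → Fin n → ℚ)
    (hz : ∀ y, rhoDodd n m y = 0 → ∃ k : ℤ, (k : ℚ) = BDodd n m z (toQD n m y)) :
    ∃ x, toQD n m x = z := by
  set W : Fin m → Fin n → ℚ := fun i s => ∑ j, gD n (s - j) * z i j
  have hW0 : ∀ i, ∃ k : ℤ, (k : ℚ) = 4 * W i 0 := fun i => by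
    simpa [W, BDodd_toQD_single, Pi.single_apply, mul_comm] using
      hz (Pi.single i (Pi.single 0 4)) (by rw [rhoDodd_single]; simp; rfl)
  have hW : ∀ i s, ∃ k : ℤ, (k : ℚ) = W i s - W i 0 := fun i s => by
    have h := hz (Pi.single i (Pi.single s 1 - Pi.single 0 1))
      (by simp [rhoDodd_single, sum_sub_distrib])
    rw [BDodd_toQD_single] at h
    simpa [W, Pi.single_apply, mul_sub, sum_sub_distrib] using h
  choose a ha using hW0
  choose b hb using hW
  refine ⟨fun i j => 2 * b i j + b i (j + 1) + b i (j - 1) + a i, funext₂ fun i j => ?_⟩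
  rw [toQD, ← sum_gD_inverse hodd (z i) j]
  push_cast
  rw [ha, hb, hb, hb]
  ring

lemma dualLatticeD_eq (hodd : Odd n) {C : Set (Fin m → ZMod 4)} (h0 : 0 ∈ C) :
    dualLatticeD n m C = toQD n m '' GammaD n m (dualCode4 m C) := by
  have : NeZero n := ⟨hodd.pos.ne'⟩
  ext z
  constructor
  · intro hz
    obtain ⟨x, rfl⟩ := exists_toQD_eq_of_forall_int hodd z fun y hy =>
      hz y (show rhoDodd n m y ∈ C from hy ▸ h0)
    refine ⟨x, (forall_mem_GammaD_iff (n := n)).mp fun y hy => ?_, rfl⟩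
    exact (exists_int_eq_BDodd_iff hodd x y).mp (hz y hy)
  · rintro ⟨x, hx, rfl⟩ y hy
    exact (exists_int_eq_BDodd_iff hodd x y).mpr (hx _ hy)

end Lattice

lemma sum_mul_eq_zero_of_eight_dvd_wtE4 {m : ℕ} {u v : Fin m → ZMod 4} (hu : 8 ∣ wtE4 m u)
    (hv : 8 ∣ wtE4 m v) (huv : 8 ∣ wtE4 m (u + v)) : ∑ i, u i * v i = 0 := by
  have hexp : (8 : ℤ) ∣ wtE4 m (u + v) - wtE4 m u - wtE4 m v
      - 2 * ∑ i, ((u i).val : ℤ) * (v i).val := by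
    simp only [wtE4, Nat.cast_sum, Nat.cast_pow, mul_sum, ← sum_sub_distrib]
    refine dvd_sum fun i _ => ?_
    rw [show ∀ p a b : ℤ, p ^ 2 - a ^ 2 - b ^ 2 - 2 * (a * b) = p ^ 2 - (a + b) ^ 2 by
      intros; ring]
    exact eight_dvd_sq_sub_sq (dvd_sub_comm.mp (four_dvd_sub_val (by simp)))
  have h4 : (4 : ℤ) ∣ ∑ i, ((u i).val : ℤ) * (v i).val := by
    have h2 : (8 : ℤ) ∣ 2 * ∑ i, ((u i).val : ℤ) * (v i).val := by
      have := (dvd_sub (dvd_sub (Int.natCast_dvd_natCast.mpr huv) (Int.natCast_dvd_natCast.mpr hu))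
        (Int.natCast_dvd_natCast.mpr hv))
      simpa using (dvd_sub_right this).mp hexp
    exact (mul_dvd_mul_iff_left two_ne_zero).mp h2
  simpa using (ZMod.intCast_zmod_eq_zero_iff_dvd _ 4).mpr h4

section Criteria

variable {n m : ℕ}

lemma isIntegralD_iff (hodd : Odd n) (C : Set (Fin m → ZMod 4)) :
    IsIntegralD n m C ↔ C ⊆ dualCode4 m C := by
  have : NeZero n := ⟨hodd.pos.ne'⟩
  calc IsIntegralD n m C
      ↔ ∀ x ∈ GammaD n m C, ∀ y ∈ GammaD n m C,
          ∑ i, rhoDodd n m x i * rhoDodd n m y i = 0 := by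
        simp only [IsIntegralD, exists_int_eq_BDodd_iff hodd]
    _ ↔ ∀ x ∈ GammaD n m C, ∀ v ∈ C, ∑ i, rhoDodd n m x i * v i = 0 :=
        forall₂_congr fun x _ =>
          forall_mem_GammaD_iff (P := fun v => ∑ i, rhoDodd n m x i * v i = 0)
    _ ↔ ∀ u ∈ C, ∀ v ∈ C, ∑ i, u i * v i = 0 :=
        forall_mem_GammaD_iff (P := fun u => ∀ v ∈ C, ∑ i, u i * v i = 0)

lemma isUnimodularD_iff (hodd : Odd n) {C : Set (Fin m → ZMod 4)} (h0 : 0 ∈ C) :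
    IsUnimodularD n m C ↔ C = dualCode4 m C := by
  have : NeZero n := ⟨hodd.pos.ne'⟩
  rw [IsUnimodularD, dualLatticeD_eq hodd h0, (Set.image_injective.mpr toQD_injective).eq_iff,
    GammaD_injective.eq_iff, eq_comm]

lemma isEvenLatD_iff (hodd : Odd n) {C : Set (Fin m → ZMod 4)}
    (hadd : ∀ u ∈ C, ∀ v ∈ C, u + v ∈ C) :
    IsEvenLatD n m C ↔ ∀ u ∈ C, 8 ∣ wtE4 m u := by
  have : NeZero n := ⟨hodd.pos.ne'⟩
  have hnorm : (∀ x ∈ GammaD n m C,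
      ∃ k : ℤ, ((2 * k : ℤ) : ℚ) = BDodd n m (toQD n m x) (toQD n m x))
      ↔ ∀ u ∈ C, 8 ∣ wtE4 m u := by
    simp only [exists_two_mul_eq_BDodd_iff hodd]
    exact forall_mem_GammaD_iff (P := fun u => 8 ∣ wtE4 m u)
  rw [IsEvenLatD, isIntegralD_iff hodd, hnorm]
  exact ⟨And.right, fun h => ⟨fun u hu v hv =>
    sum_mul_eq_zero_of_eight_dvd_wtE4 (h u hu) (h v hv) (h _ (hadd u hu v hv)), h⟩⟩

end Criteria

theorem stmt8_general (n m : ℕ) (hodd : Odd n)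
    (C : Submodule (ZMod 4) (Fin m → ZMod 4)) :
    (IsIntegralD n m (C : Set _) ↔ (C : Set _) ⊆ dualCode4 m (C : Set _)) ∧
    (IsUnimodularD n m (C : Set _) ↔ (C : Set _) = dualCode4 m (C : Set _)) ∧
    (IsEvenLatD n m (C : Set _) ↔ ∀ u ∈ C, 8 ∣ wtE4 m u) ∧
    ((IsEvenLatD n m (C : Set _) ∧ IsUnimodularD n m (C : Set _)) ↔
      ((C : Set _) = dualCode4 m (C : Set _) ∧ ∀ u ∈ C, 8 ∣ wtE4 m u)) := by
  have hunimod := isUnimodularD_iff (n := n) hodd C.zero_mem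
  have heven : IsEvenLatD n m C ↔ ∀ u ∈ C, 8 ∣ wtE4 m u :=
    isEvenLatD_iff hodd fun u hu v hv => C.add_mem hu hv
  exact ⟨isIntegralD_iff hodd _, hunimod, heven, by rw [hunimod, heven, and_comm]⟩

theorem stmt8 (n m : ℕ) (hn : 5 ≤ n) (hodd : Odd n) (hm : 0 < m)
    (C : Submodule (ZMod 4) (Fin m → ZMod 4)) :
    (IsIntegralD n m (C : Set _) ↔ (C : Set _) ⊆ dualCode4 m (C : Set _)) ∧
    (IsUnimodularD n m (C : Set _) ↔ (C : Set _) = dualCode4 m (C : Set _)) ∧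
    (IsEvenLatD n m (C : Set _) ↔ ∀ u ∈ C, 8 ∣ wtE4 m u) ∧
    ((IsEvenLatD n m (C : Set _) ∧ IsUnimodularD n m (C : Set _)) ↔
      ((C : Set _) = dualCode4 m (C : Set _) ∧ ∀ u ∈ C, 8 ∣ wtE4 m u)) :=
  stmt8_general n m hodd C
end

section
/- Let n ≥ 4 be an even integer with n ≢ 0 (mod 4), m a positive integer, and x, y : Fin m → Fin n → ℤ. Then B(x,y) ∈ ℤ if and only if ρ(x)·ρ(y) ∈ {0, 1+u} in R = 𝔽₂ + u𝔽₂, and B(x,x) ∈ 2ℤ if and only if 4 divides wt_L(ρ(x)). -/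
open Finset

/-- The ring `𝔽₂ + u𝔽₂` (dual numbers over `ℤ/2ℤ`, with `u² = 0`). -/
abbrev R2 : Type := DualNumber (ZMod 2)

/-- The bilinear form of `m` copies of the dual `D_n` root lattice (`n` even),
written in the dual basis: `B(x,y) = Σ_i Σ_j Σ_s (1/4)(n − 2|j−s|) x_{ij} y_{is}`. -/
noncomputable def BDev (n m : ℕ) (x y : Fin m → Fin n → ℚ) : ℚ :=
  ∑ i, ∑ j : Fin n, ∑ s : Fin n,
    (1 / 4) * ((n : ℚ) - 2 * |((j : ℕ) : ℚ) - ((s : ℕ) : ℚ)|) * x i j * y i s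

/-- `a_i(x)`: the sum of the odd-numbered (`1`-indexed) coordinates, mod 2. -/
def aD (n m : ℕ) (x : Fin m → Fin n → ℤ) (i : Fin m) : ZMod 2 :=
  ((∑ j ∈ Finset.univ.filter (fun j : Fin n => (j : ℕ) % 2 = 0), x i j : ℤ) : ZMod 2)

/-- `b_i(x)`: the sum of the even-numbered (`1`-indexed) coordinates, mod 2. -/
def bD (n m : ℕ) (x : Fin m → Fin n → ℤ) (i : Fin m) : ZMod 2 :=
  ((∑ j ∈ Finset.univ.filter (fun j : Fin n => (j : ℕ) % 2 = 1), x i j : ℤ) : ZMod 2)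

/-- The reduction map `ρ` to `(𝔽₂ + u𝔽₂)^m`, `ρ(x)_i = a_i + b_i(1+u)`. -/
noncomputable def rhoDev (n m : ℕ) (x : Fin m → Fin n → ℤ) : Fin m → R2 :=
  fun i => algebraMap (ZMod 2) R2 (aD n m x i) +
    algebraMap (ZMod 2) R2 (bD n m x i) * (1 + DualNumber.eps)

open scoped Classical in
/-- `N₀`: the number of coordinates equal to `0`. -/
noncomputable def N0R (m : ℕ) (w : Fin m → R2) : ℕ :=
  (Finset.univ.filter (fun i => w i = 0)).card

open scoped Classical in
/-- `N₂`: the number of coordinates equal to `u`. -/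
noncomputable def N2R (m : ℕ) (w : Fin m → R2) : ℕ :=
  (Finset.univ.filter (fun i => w i = DualNumber.eps)).card

/-- `N₁ = m − N₀ − N₂`. -/
noncomputable def N1R (m : ℕ) (w : Fin m → R2) : ℕ :=
  m - N0R m w - N2R m w

/-- The Lee weight `wt_L = N₁ + 2N₂`. -/
noncomputable def wtLR (m : ℕ) (w : Fin m → R2) : ℕ :=
  N1R m w + 2 * N2R m w

/-! ### Auxiliary machinery -/

namespace Stmt9Aux

lemma count_aux (n a b : ℕ) (hb : b < n) :
    ∑ k ∈ range n, (if a < k ∧ k ≤ b then (1:ℚ) else 0) = ((b - a : ℕ) : ℚ) := by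
  rw [Finset.sum_boole]
  have : (range n).filter (fun k => a < k ∧ k ≤ b) = Finset.Ioc a b := by
    ext k; simp [Finset.mem_Ioc]; omega
  rw [this, Nat.card_Ioc]

lemma gram' (n a b : ℕ) (hab : a ≤ b) (hb : b < n) :
    ∑ k ∈ range n, ((1:ℚ) - 2*(if a < k then 1 else 0)) * (1 - 2*(if b < k then 1 else 0))
      = (n:ℚ) - 2*((b:ℚ) - (a:ℚ)) := by
  have key : ∀ k ∈ range n, ((1:ℚ) - 2*(if a < k then 1 else 0)) * (1 - 2*(if b < k then 1 else 0))
      = 1 - 2 * (if a < k ∧ k ≤ b then (1:ℚ) else 0) := by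
    intro k _
    by_cases h1 : a < k <;> by_cases h2 : b < k
    · rw [if_pos h1, if_pos h2, if_neg (by omega)]; ring
    · rw [if_pos h1, if_neg h2, if_pos ⟨h1, by omega⟩]; ring
    · omega
    · rw [if_neg h1, if_neg h2, if_neg (by omega)]; ring
  rw [Finset.sum_congr rfl key, Finset.sum_sub_distrib, Finset.sum_const, ← Finset.mul_sum,
    count_aux n a b hb, Finset.card_range]
  push_cast [Nat.cast_sub hab]
  ring

lemma gram (n : ℕ) (j s : Fin n) :
    ∑ k : Fin n, ((1:ℚ) - 2*(if (j:ℕ) < (k:ℕ) then 1 else 0)) * (1 - 2*(if (s:ℕ) < (k:ℕ) then 1 else 0))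
      = (n:ℚ) - 2 * |((j:ℕ):ℚ) - ((s:ℕ):ℚ)| := by
  rw [Fin.sum_univ_eq_sum_range
    (fun k => ((1:ℚ) - 2*(if (j:ℕ) < k then 1 else 0)) * (1 - 2*(if (s:ℕ) < k then 1 else 0))) n]
  rcases le_total (j:ℕ) (s:ℕ) with h | h
  · rw [gram' n j s h s.isLt, abs_sub_comm,
      abs_of_nonneg (sub_nonneg.2 (Nat.cast_le.2 h : ((j:ℕ):ℚ) ≤ ((s:ℕ):ℚ)))]
  · rw [Finset.sum_congr rfl (fun k _ => mul_comm _ _), gram' n s j h j.isLt,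
      abs_of_nonneg (sub_nonneg.2 (Nat.cast_le.2 h : ((s:ℕ):ℚ) ≤ ((j:ℕ):ℚ)))]

def Sz {n : ℕ} (v : Fin n → ℤ) : ℤ := ∑ j, v j

def Pz {n : ℕ} (v : Fin n → ℤ) (k : Fin n) : ℤ :=
  ∑ j ∈ Finset.univ.filter (fun j : Fin n => (j:ℕ) < (k:ℕ)), v j

def sigz {n : ℕ} (v : Fin n → ℤ) : ℤ := ∑ k, Pz v k

def Nz (n m : ℕ) (x y : Fin m → Fin n → ℤ) : ℤ :=
  ∑ i, ∑ k : Fin n, (Sz (x i) - 2 * Pz (x i) k) * (Sz (y i) - 2 * Pz (y i) k)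

def Mz (n m : ℕ) (x y : Fin m → Fin n → ℤ) : ℤ :=
  ∑ i, (((n/2 : ℕ) : ℤ) * Sz (x i) * Sz (y i) - Sz (x i) * sigz (y i)
    - Sz (y i) * sigz (x i) + 2 * ∑ k : Fin n, Pz (x i) k * Pz (y i) k)

lemma lin_eq {n : ℕ} (v : Fin n → ℤ) (k : Fin n) :
    ∑ j : Fin n, ((1:ℚ) - 2*(if (j:ℕ) < (k:ℕ) then 1 else 0)) * (v j : ℚ)
      = ((Sz v - 2 * Pz v k : ℤ) : ℚ) := by
  have h : ∀ j : Fin n, ((1:ℚ) - 2*(if (j:ℕ) < (k:ℕ) then 1 else 0)) * (v j : ℚ)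
      = (v j : ℚ) - 2 * (if (j:ℕ) < (k:ℕ) then (v j : ℚ) else 0) := by
    intro j; split_ifs <;> ring
  rw [Finset.sum_congr rfl (fun j _ => h j), Finset.sum_sub_distrib, ← Finset.mul_sum,
    ← Finset.sum_filter]
  push_cast [Sz, Pz]
  ring

lemma inner_eq (n : ℕ) (u v : Fin n → ℚ) :
    ∑ j : Fin n, ∑ s : Fin n, ((n:ℚ) - 2*|((j:ℕ):ℚ) - ((s:ℕ):ℚ)|) * u j * v s
      = ∑ k : Fin n, (∑ j : Fin n, ((1:ℚ) - 2*(if (j:ℕ) < (k:ℕ) then 1 else 0)) * u j)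
          * (∑ s : Fin n, ((1:ℚ) - 2*(if (s:ℕ) < (k:ℕ) then 1 else 0)) * v s) := by
  have step1 : ∀ j s : Fin n, ((n:ℚ) - 2*|((j:ℕ):ℚ) - ((s:ℕ):ℚ)|) * u j * v s
      = ∑ k : Fin n, (((1:ℚ) - 2*(if (j:ℕ) < (k:ℕ) then 1 else 0)) * u j)
          * (((1:ℚ) - 2*(if (s:ℕ) < (k:ℕ) then 1 else 0)) * v s) := by
    intro j s
    rw [← gram n j s, Finset.sum_mul, Finset.sum_mul]
    exact Finset.sum_congr rfl (fun k _ => by ring)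
  calc ∑ j : Fin n, ∑ s : Fin n, ((n:ℚ) - 2*|((j:ℕ):ℚ) - ((s:ℕ):ℚ)|) * u j * v s
      = ∑ j : Fin n, ∑ s : Fin n, ∑ k : Fin n,
          (((1:ℚ) - 2*(if (j:ℕ) < (k:ℕ) then 1 else 0)) * u j)
          * (((1:ℚ) - 2*(if (s:ℕ) < (k:ℕ) then 1 else 0)) * v s) :=
        Finset.sum_congr rfl fun j _ => Finset.sum_congr rfl fun s _ => step1 j s
    _ = ∑ k : Fin n, ∑ j : Fin n, ∑ s : Fin n,
          (((1:ℚ) - 2*(if (j:ℕ) < (k:ℕ) then 1 else 0)) * u j)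
          * (((1:ℚ) - 2*(if (s:ℕ) < (k:ℕ) then 1 else 0)) * v s) := by
        rw [Finset.sum_congr rfl fun j (_ : j ∈ univ) => Finset.sum_comm]
        exact Finset.sum_comm
    _ = _ := Finset.sum_congr rfl fun k _ => (Finset.sum_mul_sum _ _ _ _).symm

lemma BDev_eq (n m : ℕ) (x y : Fin m → Fin n → ℤ) :
    4 * BDev n m (fun i j => (x i j : ℚ)) (fun i j => (y i j : ℚ)) = ((Nz n m x y : ℤ) : ℚ) := by
  unfold BDev Nz
  rw [Finset.mul_sum, Int.cast_sum]
  refine Finset.sum_congr rfl fun i _ => ?_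
  have h1 : (4:ℚ) * (∑ j : Fin n, ∑ s : Fin n,
      (1/4) * ((n:ℚ) - 2*|((j:ℕ):ℚ) - ((s:ℕ):ℚ)|) * (x i j : ℚ) * (y i s : ℚ))
      = ∑ j : Fin n, ∑ s : Fin n,
          ((n:ℚ) - 2*|((j:ℕ):ℚ) - ((s:ℕ):ℚ)|) * (x i j : ℚ) * (y i s : ℚ) := by
    rw [Finset.mul_sum]
    refine Finset.sum_congr rfl fun j _ => ?_
    rw [Finset.mul_sum]
    exact Finset.sum_congr rfl fun s _ => by ring
  rw [h1, inner_eq, Int.cast_sum]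
  refine Finset.sum_congr rfl fun k _ => ?_
  rw [lin_eq, lin_eq, Int.cast_mul]

lemma Nz_eq (n m : ℕ) (heven : Even n) (x y : Fin m → Fin n → ℤ) :
    Nz n m x y = 2 * Mz n m x y := by
  have hN : n = 2 * (n/2) := by obtain ⟨t, ht⟩ := heven; omega
  have hn2 : (n : ℤ) = 2 * ((n/2 : ℕ) : ℤ) := by exact_mod_cast congrArg (Nat.cast (R := ℤ)) hN
  unfold Nz Mz
  rw [Finset.mul_sum]
  refine Finset.sum_congr rfl fun i _ => ?_
  have h : ∀ k : Fin n, (Sz (x i) - 2 * Pz (x i) k) * (Sz (y i) - 2 * Pz (y i) k)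
      = Sz (x i) * Sz (y i) - 2 * (Sz (x i) * Pz (y i) k) - 2 * (Sz (y i) * Pz (x i) k)
        + 4 * (Pz (x i) k * Pz (y i) k) := fun k => by ring
  rw [Finset.sum_congr rfl fun k _ => h k]
  simp only [Finset.sum_add_distrib, Finset.sum_sub_distrib, ← Finset.mul_sum,
    Finset.sum_const, card_univ, Fintype.card_fin, nsmul_eq_mul]
  rw [show ((n:ℤ)) = 2 * ((n/2:ℕ):ℤ) from hn2]
  unfold sigz
  ring

lemma card_gt (n : ℕ) (j : Fin n) :
    (Finset.univ.filter (fun k : Fin n => (j:ℕ) < (k:ℕ))).card = n - 1 - (j:ℕ) := by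
  have hj := j.isLt
  rw [Finset.card_filter]
  rw [Fin.sum_univ_eq_sum_range (fun k => if (j:ℕ) < k then 1 else 0) n]
  rw [← Finset.card_filter]
  have : (range n).filter (fun k => (j:ℕ) < k) = Finset.Ioc (j:ℕ) (n-1) := by
    ext k; simp [Finset.mem_Ioc]; omega
  rw [this, Nat.card_Ioc]

lemma sigz_eq (n : ℕ) (v : Fin n → ℤ) :
    sigz v = ∑ j : Fin n, ((n - 1 - (j:ℕ) : ℕ) : ℤ) * v j := by
  have h : ∀ k : Fin n, Pz v k = ∑ j : Fin n, if (j:ℕ) < (k:ℕ) then v j else 0 := by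
    intro k; unfold Pz; rw [Finset.sum_filter]
  unfold sigz
  rw [Finset.sum_congr rfl fun k _ => h k, Finset.sum_comm]
  refine Finset.sum_congr rfl fun j _ => ?_
  rw [← Finset.sum_filter, Finset.sum_const, card_gt n j, nsmul_eq_mul]

lemma Sz_mod (n m : ℕ) (x : Fin m → Fin n → ℤ) (i : Fin m) :
    ((Sz (x i) : ℤ) : ZMod 2) = aD n m x i + bD n m x i := by
  unfold Sz aD bD
  rw [← Finset.sum_filter_add_sum_filter_not Finset.univ (fun j : Fin n => (j:ℕ) % 2 = 0) (x i)]
  have hset : Finset.univ.filter (fun j : Fin n => ¬ ((j:ℕ) % 2 = 0))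
      = Finset.univ.filter (fun j : Fin n => (j:ℕ) % 2 = 1) := by
    apply Finset.filter_congr; intro j _; constructor <;> (intro h; omega)
  rw [hset, Int.cast_add]

lemma sigz_mod (n m : ℕ) (hn2 : n % 2 = 0) (x : Fin m → Fin n → ℤ) (i : Fin m) :
    ((sigz (x i) : ℤ) : ZMod 2) = aD n m x i := by
  have key : ∀ j : Fin n, (((n - 1 - (j:ℕ) : ℕ) : ℤ) : ZMod 2) * ((x i j : ℤ) : ZMod 2)
      = if (j:ℕ) % 2 = 0 then ((x i j : ℤ) : ZMod 2) else 0 := by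
    intro j
    have hj := j.isLt
    have hcast : (((n - 1 - (j:ℕ) : ℕ) : ℤ) : ZMod 2) = (((n - 1 - (j:ℕ)) % 2 : ℕ) : ZMod 2) := by
      rw [Int.cast_natCast, ZMod.natCast_mod]
    by_cases hp : (j:ℕ) % 2 = 0
    · rw [if_pos hp, hcast, show (n-1-(j:ℕ))%2 = 1 by omega]; simp
    · rw [if_neg hp, hcast, show (n-1-(j:ℕ))%2 = 0 by omega]; simp
  calc ((sigz (x i) : ℤ) : ZMod 2)
      = ∑ j : Fin n, (((n-1-(j:ℕ) : ℕ):ℤ):ZMod 2) * ((x i j : ℤ):ZMod 2) := by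
        rw [sigz_eq, Int.cast_sum]
        exact Finset.sum_congr rfl fun j _ => Int.cast_mul _ _
    _ = ∑ j : Fin n, if (j:ℕ)%2=0 then ((x i j :ℤ):ZMod 2) else 0 :=
        Finset.sum_congr rfl fun j _ => key j
    _ = aD n m x i := by
        rw [← Finset.sum_filter]
        unfold aD
        rw [Int.cast_sum]

lemma rho_fst (n m : ℕ) (x : Fin m → Fin n → ℤ) (i : Fin m) :
    (rhoDev n m x i).fst = aD n m x i + bD n m x i := by
  unfold rhoDev
  rw [TrivSqZeroExt.fst_add, TrivSqZeroExt.fst_mul, TrivSqZeroExt.fst_add]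
  simp only [TrivSqZeroExt.algebraMap_eq_inl', TrivSqZeroExt.fst_inl, DualNumber.fst_eps,
    TrivSqZeroExt.fst_one]
  simp

lemma rho_snd (n m : ℕ) (x : Fin m → Fin n → ℤ) (i : Fin m) :
    (rhoDev n m x i).snd = bD n m x i := by
  unfold rhoDev
  rw [TrivSqZeroExt.snd_add, TrivSqZeroExt.snd_mul]
  simp only [TrivSqZeroExt.algebraMap_eq_inl', TrivSqZeroExt.snd_inl, TrivSqZeroExt.snd_add,
    TrivSqZeroExt.fst_inl, DualNumber.snd_eps, TrivSqZeroExt.snd_one, TrivSqZeroExt.fst_add]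
  simp

lemma snd_mul' (w v : R2) : (w * v).snd = w.fst * v.snd + v.fst * w.snd := by
  rw [TrivSqZeroExt.snd_mul]
  simp [smul_eq_mul, mul_comm]

lemma rho_zero_iff (n m : ℕ) (x : Fin m → Fin n → ℤ) (i : Fin m) :
    rhoDev n m x i = 0 ↔ (aD n m x i = 0 ∧ bD n m x i = 0) := by
  rw [TrivSqZeroExt.ext_iff, rho_fst, rho_snd]
  simp only [TrivSqZeroExt.fst_zero, TrivSqZeroExt.snd_zero]
  generalize aD n m x i = a
  generalize bD n m x i = b
  revert a b; decide

lemma rho_eps_iff (n m : ℕ) (x : Fin m → Fin n → ℤ) (i : Fin m) :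
    rhoDev n m x i = DualNumber.eps ↔ (aD n m x i = 1 ∧ bD n m x i = 1) := by
  rw [TrivSqZeroExt.ext_iff, rho_fst, rho_snd]
  simp only [DualNumber.fst_eps, DualNumber.snd_eps]
  generalize aD n m x i = a
  generalize bD n m x i = b
  revert a b; decide

lemma mem_iff (w : R2) :
    w ∈ ({0, 1 + DualNumber.eps} : Set R2) ↔ w.fst + w.snd = 0 := by
  simp only [Set.mem_insert_iff, Set.mem_singleton_iff, TrivSqZeroExt.ext_iff,
    TrivSqZeroExt.fst_zero, TrivSqZeroExt.snd_zero, TrivSqZeroExt.fst_add, TrivSqZeroExt.snd_add,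
    TrivSqZeroExt.fst_one, TrivSqZeroExt.snd_one, DualNumber.fst_eps, DualNumber.snd_eps]
  generalize w.fst = a
  generalize w.snd = b
  revert a b; decide

lemma sum_fst_snd (n m : ℕ) (x y : Fin m → Fin n → ℤ) :
    (∑ i, rhoDev n m x i * rhoDev n m y i).fst
      + (∑ i, rhoDev n m x i * rhoDev n m y i).snd
      = ∑ i, (aD n m x i * aD n m y i + bD n m x i * bD n m y i) := by
  rw [TrivSqZeroExt.fst_sum, TrivSqZeroExt.snd_sum, ← Finset.sum_add_distrib]
  refine Finset.sum_congr rfl fun i _ => ?_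
  rw [TrivSqZeroExt.fst_mul, snd_mul', rho_fst, rho_snd, rho_fst, rho_snd]
  generalize aD n m x i = a
  generalize bD n m x i = b
  generalize aD n m y i = a'
  generalize bD n m y i = b'
  revert a b a' b'; decide

lemma Mz_mod2 (n m : ℕ) (hn : n % 4 = 2) (x y : Fin m → Fin n → ℤ) :
    ((Mz n m x y : ℤ) : ZMod 2)
      = ∑ i, (aD n m x i * aD n m y i + bD n m x i * bD n m y i) := by
  have ht : (((n/2 : ℕ) : ℤ) : ZMod 2) = 1 := by
    have h1 : (n/2) % 2 = 1 := by omega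
    rw [Int.cast_natCast, ← ZMod.natCast_mod, h1, Nat.cast_one]
  unfold Mz
  set w : ℤ := ((n/2 : ℕ) : ℤ) with hw
  push_cast
  refine Finset.sum_congr rfl fun i _ => ?_
  rw [ht, Sz_mod, Sz_mod, sigz_mod n m (by omega) x i, sigz_mod n m (by omega) y i]
  generalize aD n m x i = a
  generalize bD n m x i = b
  generalize aD n m y i = a'
  generalize bD n m y i = b'
  generalize (∑ k : Fin n, (((Pz (x i) k : ℤ) : ZMod 2) * ((Pz (y i) k : ℤ) : ZMod 2))) = r
  revert a b a' b' r; decide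

lemma per_i (t S σ r : ℤ) (hrσ : 2 ∣ (r - σ)) :
    (4:ℤ) ∣ (t*S*S - S*σ - S*σ + 2*r
      - (if (S : ZMod 2) = 1 then t else if (σ : ZMod 2) = 1 then 2 else 0)) := by
  have evz : ∀ c : ℤ, ((c + c : ℤ) : ZMod 2) = 0 := by
    intro c; push_cast; rw [← two_mul, show (2:ZMod 2) = 0 from rfl, zero_mul]
  have odz : ∀ c : ℤ, ((2*c + 1 : ℤ) : ZMod 2) = 1 := by
    intro c; push_cast; rw [show (2:ZMod 2) = 0 from rfl]; ring
  obtain ⟨d, hd⟩ := hrσ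
  rcases Int.even_or_odd S with ⟨c, hc⟩ | ⟨c, hc⟩
  · have hS0 : ¬ ((S : ZMod 2) = 1) := by rw [hc, evz]; decide
    rw [if_neg hS0]
    rcases Int.even_or_odd σ with ⟨e, he⟩ | ⟨e, he⟩
    · have hσ0 : ¬ ((σ : ZMod 2) = 1) := by rw [he, evz]; decide
      rw [if_neg hσ0]
      have hr : r = (e + e) + 2*d := by omega
      refine ⟨t*c*c - 2*c*e + e + d, ?_⟩
      rw [hc, he, hr]; ring
    · have hσ1 : ((σ : ZMod 2) = 1) := by rw [he, odz]
      rw [if_pos hσ1]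
      have hr : r = (2*e + 1) + 2*d := by omega
      refine ⟨t*c*c - c*(2*e+1) + e + d, ?_⟩
      rw [hc, he, hr]; ring
  · have hS1 : ((S : ZMod 2) = 1) := by rw [hc, odz]
    rw [if_pos hS1]
    have hr : r = σ + 2*d := by omega
    refine ⟨t*c*c + t*c - c*σ + d, ?_⟩
    rw [hc, hr]; ring

end Stmt9Aux

open Stmt9Aux in
theorem stmt9 (n m : ℕ) (hn : 4 ≤ n) (heven : Even n) (hn4 : ¬ (4 ∣ n))
    (hm : 0 < m) (x y : Fin m → Fin n → ℤ) :
    ((∃ k : ℤ, (k : ℚ) =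
        BDev n m (fun i j => (x i j : ℚ)) (fun i j => (y i j : ℚ))) ↔
      ∑ i, rhoDev n m x i * rhoDev n m y i ∈
        ({0, 1 + DualNumber.eps} : Set R2)) ∧
    ((∃ k : ℤ, ((2 * k : ℤ) : ℚ) =
        BDev n m (fun i j => (x i j : ℚ)) (fun i j => (x i j : ℚ))) ↔
      4 ∣ wtLR m (rhoDev n m x)) := by
  classical
  have hn42 : n % 4 = 2 := by
    have h2 : n % 2 = 0 := Nat.even_iff.1 heven
    omega
  constructor
  · -- Part 1
    have hBN := BDev_eq n m x y
    have key1 : (∃ k : ℤ, (k:ℚ) =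
        BDev n m (fun i j => (x i j : ℚ)) (fun i j => (y i j : ℚ))) ↔ (4:ℤ) ∣ Nz n m x y := by
      constructor
      · rintro ⟨k, hk⟩
        refine ⟨k, ?_⟩
        have : ((Nz n m x y : ℤ) : ℚ) = ((4*k : ℤ) : ℚ) := by
          rw [← hBN, ← hk]; push_cast; ring
        exact_mod_cast this
      · rintro ⟨c, hc⟩
        refine ⟨c, ?_⟩
        have h4 : ((Nz n m x y : ℤ) : ℚ) = 4*(c:ℚ) := by rw [hc]; push_cast; ring
        rw [h4] at hBN
        linarith
    rw [key1, mem_iff, sum_fst_snd]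
    rw [Nz_eq n m heven x y]
    have h2M : (4:ℤ) ∣ 2 * Mz n m x y ↔ (2:ℤ) ∣ Mz n m x y := by omega
    rw [h2M, ← Mz_mod2 n m hn42 x y]
    exact (ZMod.intCast_zmod_eq_zero_iff_dvd (Mz n m x y) 2).symm
  · -- Part 2
    have hBN := BDev_eq n m x x
    have key2 : (∃ k : ℤ, ((2*k : ℤ):ℚ) =
        BDev n m (fun i j => (x i j : ℚ)) (fun i j => (x i j : ℚ))) ↔ (8:ℤ) ∣ Nz n m x x := by
      constructor
      · rintro ⟨k, hk⟩
        refine ⟨k, ?_⟩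
        have : ((Nz n m x x : ℤ) : ℚ) = ((8*k : ℤ) : ℚ) := by
          rw [← hBN, ← hk]; push_cast; ring
        exact_mod_cast this
      · rintro ⟨c, hc⟩
        refine ⟨c, ?_⟩
        have h8 : ((Nz n m x x : ℤ) : ℚ) = 8*(c:ℚ) := by rw [hc]; push_cast; ring
        rw [h8] at hBN
        push_cast
        linarith
    rw [key2, Nz_eq n m heven x x]
    have h2M : (8:ℤ) ∣ 2 * Mz n m x x ↔ (4:ℤ) ∣ Mz n m x x := by omega
    rw [h2M]
    -- setup counts
    set t : ℤ := ((n/2 : ℕ) : ℤ) with ht_def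
    set p : Fin m → Prop := fun i => ((Sz (x i) : ℤ) : ZMod 2) = 1 with hp_def
    set q : Fin m → Prop := fun i => ((sigz (x i) : ℤ) : ZMod 2) = 1 with hq_def
    set C1 : ℕ := (Finset.univ.filter p).card with hC1_def
    set C2 : ℕ := (Finset.univ.filter (fun i => ¬ p i ∧ q i)).card with hC2_def
    set C0 : ℕ := (Finset.univ.filter (fun i => ¬ p i ∧ ¬ q i)).card with hC0_def
    -- step A : 4 ∣ Mz - ∑ W
    have hA : (4:ℤ) ∣ (Mz n m x x - ∑ i, (if p i then t else if q i then 2 else 0)) := by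
      unfold Mz
      rw [← Finset.sum_sub_distrib]
      apply Finset.dvd_sum
      intro i _
      have hrσ : (2:ℤ) ∣ ((∑ k : Fin n, Pz (x i) k * Pz (x i) k) - sigz (x i)) := by
        unfold sigz
        rw [← Finset.sum_sub_distrib]
        apply Finset.dvd_sum
        intro k _
        have h : Pz (x i) k * Pz (x i) k - Pz (x i) k = (Pz (x i) k - 1) * ((Pz (x i) k - 1) + 1) := by
          ring
        rw [h]
        exact (Int.even_mul_succ_self (Pz (x i) k - 1)).two_dvd
      exact per_i t (Sz (x i)) (sigz (x i)) _ hrσ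
    -- step B : ∑ W = t * C1 + 2 * C2
    have hsum : (∑ i, (if p i then t else if q i then 2 else 0))
        = t * (C1:ℤ) + 2 * (C2:ℤ) := by
      have hW : ∀ i : Fin m, (if p i then t else if q i then (2:ℤ) else 0)
          = (if p i then t else 0) + (if ¬ p i ∧ q i then 2 else 0) := by
        intro i
        by_cases hp : p i
        · rw [if_pos hp, if_pos hp, if_neg (fun h => h.1 hp)]; ring
        · rw [if_neg hp, if_neg hp]
          by_cases hq : q i
          · rw [if_pos hq, if_pos ⟨hp, hq⟩]; ring
          · rw [if_neg hq, if_neg (fun h => hq h.2)]; ring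
      rw [Finset.sum_congr rfl fun i _ => hW i, Finset.sum_add_distrib]
      congr 1
      · rw [← Finset.sum_filter, Finset.sum_const, nsmul_eq_mul, mul_comm, hC1_def]
      · rw [← Finset.sum_filter, Finset.sum_const, nsmul_eq_mul, mul_comm, hC2_def]
    -- identify counts with rho
    have h0iff : ∀ i : Fin m, rhoDev n m x i = 0 ↔ (¬ p i ∧ ¬ q i) := by
      intro i
      rw [rho_zero_iff, hp_def, hq_def]
      simp only
      rw [Sz_mod, sigz_mod n m (by omega) x i]
      generalize aD n m x i = a
      generalize bD n m x i = b
      revert a b; decide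
    have hepsiff : ∀ i : Fin m, rhoDev n m x i = DualNumber.eps ↔ (¬ p i ∧ q i) := by
      intro i
      rw [rho_eps_iff, hp_def, hq_def]
      simp only
      rw [Sz_mod, sigz_mod n m (by omega) x i]
      generalize aD n m x i = a
      generalize bD n m x i = b
      revert a b; decide
    have hN0 : N0R m (rhoDev n m x) = C0 := by
      unfold N0R
      rw [hC0_def]
      exact congrArg Finset.card (Finset.filter_congr fun i _ => by
        rw [h0iff i])
    have hN2 : N2R m (rhoDev n m x) = C2 := by
      unfold N2R
      rw [hC2_def]
      exact congrArg Finset.card (Finset.filter_congr fun i _ => by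
        rw [hepsiff i])
    have hparts : C1 + (C2 + C0) = m := by
      have h1 := Finset.card_filter_add_card_filter_not (s := (Finset.univ : Finset (Fin m)))
        (p := p)
      have h2 := Finset.card_filter_add_card_filter_not
        (s := Finset.univ.filter (fun i => ¬ p i)) (p := q)
      rw [Finset.filter_filter, Finset.filter_filter] at h2
      rw [Finset.card_univ, Fintype.card_fin] at h1
      rw [hC1_def, hC2_def, hC0_def]
      omega
    have hwt : wtLR m (rhoDev n m x) = C1 + 2 * C2 := by
      unfold wtLR N1R
      rw [hN0, hN2]
      omega
    rw [hwt]
    -- final chain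
    obtain ⟨c0, hc0⟩ := hA
    have ht2 : t % 2 = 1 := by
      rw [ht_def]
      omega
    constructor
    · intro hdvd
      have hW4 : (4:ℤ) ∣ t * (C1:ℤ) + 2 * (C2:ℤ) := by
        rw [← hsum]; omega
      have h14 : t % 4 = 1 ∨ t % 4 = 3 := by omega
      rcases h14 with h | h
      · obtain ⟨u, hu⟩ : ∃ u : ℤ, t = 4*u + 1 := ⟨t/4, by omega⟩
        rw [hu] at hW4
        have hexp : (4*u + 1) * (C1:ℤ) + 2*(C2:ℤ) = 4*(u*(C1:ℤ)) + ((C1:ℤ) + 2*(C2:ℤ)) := by ring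
        rw [hexp] at hW4
        generalize u * (C1:ℤ) = z at hW4
        omega
      · obtain ⟨u, hu⟩ : ∃ u : ℤ, t = 4*u + 3 := ⟨t/4, by omega⟩
        rw [hu] at hW4
        have hexp : (4*u + 3) * (C1:ℤ) + 2*(C2:ℤ)
            = 4*(u*(C1:ℤ) + (C1:ℤ) + (C2:ℤ)) - ((C1:ℤ) + 2*(C2:ℤ)) := by ring
        rw [hexp] at hW4
        generalize u * (C1:ℤ) + (C1:ℤ) + (C2:ℤ) = z at hW4
        omega
    · intro hdvd
      have hW4 : (4:ℤ) ∣ t * (C1:ℤ) + 2 * (C2:ℤ) := by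
        have h14 : t % 4 = 1 ∨ t % 4 = 3 := by omega
        rcases h14 with h | h
        · obtain ⟨u, hu⟩ : ∃ u : ℤ, t = 4*u + 1 := ⟨t/4, by omega⟩
          rw [hu]
          have hexp : (4*u + 1) * (C1:ℤ) + 2*(C2:ℤ) = 4*(u*(C1:ℤ)) + ((C1:ℤ) + 2*(C2:ℤ)) := by ring
          rw [hexp]
          generalize u * (C1:ℤ) = z
          omega
        · obtain ⟨u, hu⟩ : ∃ u : ℤ, t = 4*u + 3 := ⟨t/4, by omega⟩
          rw [hu]
          have hexp : (4*u + 3) * (C1:ℤ) + 2*(C2:ℤ)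
              = 4*(u*(C1:ℤ) + (C1:ℤ) + (C2:ℤ)) - ((C1:ℤ) + 2*(C2:ℤ)) := by ring
          rw [hexp]
          generalize u * (C1:ℤ) + (C1:ℤ) + (C2:ℤ) = z
          omega
      rw [← hsum] at hW4
      omega
end
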